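/- arXiv:2208.01470 — 6 statements merged into one kernel-verified Lean document; each statement's English description precedes it below -/
import Mathlib

section
/- Let r, t, n_1, ..., n_r be positive integers with r ≥ t ≥ 2. Then ex(K_{n_1,...,n_r}, K_t) = f_t(n_1,...,n_r). -/
open SimpleGraph Finset

/-- `F` has a (not necessarily induced) copy in `G`:  there is an injective map of the
vertices of `F` into the vertices of `G` preserving adjacency. -/
def HasCopy {α β : Type*} (G : SimpleGraph α) (F : SimpleGraph β) : Prop :=
  ∃ f : β → α, Function.Injective f ∧ ∀ ⦃a b⦄, F.Adj a b → G.Adj (f a) (f b)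

/-- `exNum G F` is the maximum number of edges of a spanning subgraph of `G`
containing no copy of `F`. -/
noncomputable def exNum {α β : Type*} [Fintype α] (G : SimpleGraph α) (F : SimpleGraph β) : ℕ :=
  sSup {m | ∃ H : SimpleGraph α, H ≤ G ∧ ¬ HasCopy H F ∧ m = H.edgeSet.ncard}

/-- `kCliques k t` is the disjoint union of `k` copies of the complete graph `K_t`. -/
def kCliques (k t : ℕ) : SimpleGraph (Fin k × Fin t) :=
  SimpleGraph.fromRel (fun p q => p.1 = q.1)

/-- The complete multipartite graph with parts of sizes `n 0, …, n (r-1)`. -/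
abbrev completeMultipartite {r : ℕ} (n : Fin r → ℕ) : SimpleGraph (Σ i : Fin r, Fin (n i)) :=
  completeMultipartiteGraph (fun i => Fin (n i))

/-- The sum of `x` over the part of the (labelled) partition `g` with label `i`. -/
def partSum {r s : ℕ} (x : Fin r → ℕ) (g : Fin r → Fin s) (i : Fin s) : ℕ :=
  ∑ a ∈ Finset.univ.filter (fun a => g a = i), x a

/-- The sum, over unordered pairs of distinct parts of the (labelled) partition `g`,
of the products of the part sums of `x`. -/
def pairProdSum {r s : ℕ} (x : Fin r → ℕ) (g : Fin r → Fin s) : ℕ :=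
  ∑ p ∈ Finset.univ.filter (fun p : Fin s × Fin s => p.1 < p.2),
    partSum x g p.1 * partSum x g p.2

/-- The function `f_t` : the maximum, over all partitions of `{0, …, r-1}` into `t-1`
nonempty parts (encoded as surjections onto `Fin (t-1)`), of the sum over unordered pairs
of distinct parts of the products of the part sums. -/
def fT {r : ℕ} (t : ℕ) (x : Fin r → ℕ) : ℕ :=
  (Finset.univ.filter (fun g : Fin r → Fin (t - 1) => Function.Surjective g)).sup
    (fun g => pairProdSum x g)

/-!
Write `w_x(G) = ∑_{a ~ b} x a * x b` over ordered adjacent pairs, so that `w_1(G) = 2 e(G)`.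

Upper bound. In a `K_t`-free `H ≤ K_{n_1,…,n_r}`, collapsing a part onto its vertex with the most
neighbours keeps `H` free of `K_t` and does not decrease `e(H)`, because the part is independent.
Doing this part by part turns `H` into a blow-up of a `K_t`-free graph `H₀` on the set of parts,
and `2 e(H) ≤ w_n(H₀)`. Erdős's argument for Turán's theorem works with weights: for a vertex `v` of
maximal weighted degree, its neighbourhood `A` is `K_{t-1}`-free and the pairs not inside `A`
contribute at most `2 x(A) x(Aᶜ)`, which is exactly what a new class `Aᶜ` contributes to a
complete multipartite graph. So `w_n(H₀) ≤ 2 ∑_{i<j} n_{P_i} n_{P_j}` for a partition `P` of the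
parts into `t - 1` possibly empty classes. Splitting a class only adds edges, so as `r ≥ t - 1` the
classes may be taken nonempty.

Lower bound: the blow-up of the complete `(t-1)`-partite graph on the parts given by `P`.
-/

open scoped Classical

lemma hasCopy_iff_isContained {α β : Type*} (G : SimpleGraph α) (F : SimpleGraph β) :
    HasCopy G F ↔ F ⊑ G :=
  ⟨fun ⟨f, hf, hadj⟩ => ⟨⟨⟨f, fun h => hadj h⟩, hf⟩⟩,
    fun ⟨c⟩ => ⟨c, c.injective, fun _ _ h => c.toHom.map_adj h⟩⟩

lemma not_hasCopy_completeGraph_iff {α : Type*} (G : SimpleGraph α) (k : ℕ) :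
    ¬ HasCopy G (completeGraph (Fin k)) ↔ G.CliqueFree k := by
  rw [hasCopy_iff_isContained, ← not_cliqueFree_iff_top_isContained, not_not]

lemma SimpleGraph.CliqueFree.of_hom {α β : Type*} {G : SimpleGraph α} {H : SimpleGraph β}
    {k : ℕ} (f : G →g H) (h : H.CliqueFree k) : G.CliqueFree k := by
  rw [← not_not (a := G.CliqueFree k), not_cliqueFree_iff_top_isContained]
  rintro ⟨c⟩
  exact (not_cliqueFree_iff_top_isContained k).2
    ⟨(f.comp c.toHom).toCopy (Hom.injective_of_top_hom _)⟩ h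

section WeightedInteredges

variable {α : Type*} (G : SimpleGraph α) (x : α → ℕ)

noncomputable def weightedInteredges (s t : Finset α) : ℕ :=
  ∑ a ∈ s, ∑ b ∈ t, if G.Adj a b then x a * x b else 0

variable {G} {s t : Finset α}

lemma weightedInteredges_union_left {s₁ s₂ : Finset α} (h : Disjoint s₁ s₂) :
    weightedInteredges G x (s₁ ∪ s₂) t =
      weightedInteredges G x s₁ t + weightedInteredges G x s₂ t :=
  sum_union h

lemma weightedInteredges_union_right {t₁ t₂ : Finset α} (h : Disjoint t₁ t₂) :
    weightedInteredges G x s (t₁ ∪ t₂) =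
      weightedInteredges G x s t₁ + weightedInteredges G x s t₂ := by
  simp only [weightedInteredges, sum_union h, sum_add_distrib]

lemma weightedInteredges_self_eq_filter_add_filter_not (p : α → Prop) :
    weightedInteredges G x s s =
      weightedInteredges G x (s.filter p) (s.filter p)
        + weightedInteredges G x (s.filter p) (s.filter (¬ p ·))
        + weightedInteredges G x (s.filter (¬ p ·)) (s.filter p)
        + weightedInteredges G x (s.filter (¬ p ·)) (s.filter (¬ p ·)) := by
  have h := disjoint_filter_filter_not s s p
  conv_lhs => rw [← filter_union_filter_not_eq p s]
  rw [weightedInteredges_union_left x h, weightedInteredges_union_right x h,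
    weightedInteredges_union_right x h]
  ring

lemma weightedInteredges_comm : weightedInteredges G x s t = weightedInteredges G x t s := by
  rw [weightedInteredges, sum_comm]
  simp only [G.adj_comm, mul_comm, weightedInteredges]

lemma weightedInteredges_mono {G' : SimpleGraph α} (h : G ≤ G') :
    weightedInteredges G x s t ≤ weightedInteredges G' x s t := by
  refine sum_le_sum fun a _ => sum_le_sum fun b _ => ?_
  split_ifs with h₁ h₂
  · exact le_rfl
  · exact absurd (h h₁) h₂
  · exact Nat.zero_le _
  · exact le_rfl

lemma weightedInteredges_mono_right {t' : Finset α} (h : t ⊆ t') :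
    weightedInteredges G x s t ≤ weightedInteredges G x s t' :=
  sum_le_sum fun _ _ => sum_le_sum_of_subset h

lemma weightedInteredges_congr {G' : SimpleGraph α}
    (h : ∀ a ∈ s, ∀ b ∈ t, G.Adj a b ↔ G'.Adj a b) :
    weightedInteredges G x s t = weightedInteredges G' x s t :=
  sum_congr rfl fun a ha => sum_congr rfl fun b hb => by rw [h a ha b hb]

lemma weightedInteredges_eq_zero (h : ∀ a ∈ s, ∀ b ∈ t, ¬ G.Adj a b) :
    weightedInteredges G x s t = 0 :=
  sum_eq_zero fun a ha => sum_eq_zero fun b hb => if_neg (h a ha b hb)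

lemma weightedInteredges_eq_mul (h : ∀ a ∈ s, ∀ b ∈ t, G.Adj a b) :
    weightedInteredges G x s t = (∑ a ∈ s, x a) * ∑ b ∈ t, x b := by
  rw [sum_mul_sum]
  exact sum_congr rfl fun a ha => sum_congr rfl fun b hb => if_pos (h a ha b hb)

lemma weightedInteredges_eq_sum_mul :
    weightedInteredges G x s t = ∑ a ∈ s, x a * ∑ b ∈ t with G.Adj a b, x b := by
  simp only [weightedInteredges, sum_filter, mul_sum, mul_ite, mul_zero]

lemma two_mul_ncard_edgeSet [Fintype α] (G : SimpleGraph α) :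
    2 * G.edgeSet.ncard = weightedInteredges G 1 univ univ := by
  rw [← coe_edgeFinset, Set.ncard_coe_finset, ← G.sum_degrees_eq_twice_card_edges]
  refine sum_congr rfl fun a _ => ?_
  simp [← card_neighborFinset_eq_degree, neighborFinset_eq_filter]

end WeightedInteredges

lemma weightedInteredges_comap_univ {α β : Type*} [Fintype α] [Fintype β] [DecidableEq β]
    (g : α → β) (H : SimpleGraph β) (x : α → ℕ) :
    weightedInteredges (H.comap g) x univ univ =
      weightedInteredges H (fun b => ∑ a with g a = b, x a) univ univ := by
  symm
  calc ∑ p, ∑ q, (if H.Adj p q then (∑ a with g a = p, x a) * ∑ b with g b = q, x b else 0)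
      = ∑ p, ∑ q, ∑ a with g a = p, ∑ b with g b = q,
          if H.Adj (g a) (g b) then x a * x b else 0 := by
        refine sum_congr rfl fun p _ => sum_congr rfl fun q _ => ?_
        split_ifs with hpq
        · rw [sum_mul_sum]
          refine sum_congr rfl fun a ha => sum_congr rfl fun b hb => ?_
          rw [(mem_filter.1 ha).2, (mem_filter.1 hb).2, if_pos hpq]
        · refine (sum_eq_zero fun a ha => sum_eq_zero fun b hb => ?_).symm
          rw [(mem_filter.1 ha).2, (mem_filter.1 hb).2, if_neg hpq]
    _ = ∑ p, ∑ a with g a = p, ∑ q, ∑ b with g b = q,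
          if H.Adj (g a) (g b) then x a * x b else 0 :=
        sum_congr rfl fun _ _ => sum_comm
    _ = weightedInteredges (H.comap g) x univ univ := by
        simp only [sum_fiberwise, weightedInteredges, comap_adj]

lemma weightedInteredges_top {β : Type*} [Fintype β] [LinearOrder β] (σ : β → ℕ) :
    weightedInteredges (⊤ : SimpleGraph β) σ univ univ =
      2 * ∑ p ∈ univ.filter (fun p : β × β => p.1 < p.2), σ p.1 * σ p.2 := by
  have hne : ∀ p q : β, (if p ≠ q then σ p * σ q else 0) =
      (if p < q then σ p * σ q else 0) + if q < p then σ q * σ p else 0 := by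
    intro p q
    rcases lt_trichotomy p q with h | rfl | h
    · rw [if_pos h.ne, if_pos h, if_neg h.asymm, add_zero]
    · simp
    · rw [if_pos h.ne', if_neg h.asymm, if_pos h, zero_add, mul_comm]
  simp only [weightedInteredges, top_adj, hne, sum_add_distrib]
  rw [sum_comm (f := fun p q => if q < p then σ q * σ p else 0), two_mul, sum_filter,
    ← Fintype.sum_prod_type']

lemma weightedInteredges_comap_top_eq_pairProdSum {r s : ℕ} (x : Fin r → ℕ) (g : Fin r → Fin s) :
    weightedInteredges ((⊤ : SimpleGraph (Fin s)).comap g) x univ univ = 2 * pairProdSum x g := by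
  rw [weightedInteredges_comap_univ, weightedInteredges_top]
  rfl

lemma weightedInteredges_comap_sigmaFst {ι : Type*} [Fintype ι] [DecidableEq ι]
    {V : ι → Type*} [∀ i, Fintype (V i)] (H₀ : SimpleGraph ι) :
    weightedInteredges (H₀.comap (Sigma.fst : (Σ i, V i) → ι)) 1 univ univ =
      weightedInteredges H₀ (fun i => Fintype.card (V i)) univ univ := by
  rw [weightedInteredges_comap_univ]
  congr 1
  ext i
  rw [sum_filter, Fintype.sum_sigma]
  simp

section WeightedTuran

variable {ι : Type*} {G : SimpleGraph ι} (x : ι → ℕ)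

lemma weightedInteredges_le_of_max_weightedDegree {S : Finset ι} {v : ι}
    (hv : ∀ u ∈ S, ∑ b ∈ S with G.Adj u b, x b ≤ ∑ b ∈ S with G.Adj v b, x b) :
    weightedInteredges G x S S ≤
      weightedInteredges G x (S.filter (G.Adj v)) (S.filter (G.Adj v))
        + 2 * ((∑ a ∈ S with ¬ G.Adj v a, x a) * ∑ a ∈ S with G.Adj v a, x a) := by
  rw [weightedInteredges_self_eq_filter_add_filter_not x (G.Adj v)]
  set A := S.filter (G.Adj v)
  set B := S.filter (¬ G.Adj v ·)
  have hBS : weightedInteredges G x B S ≤ (∑ a ∈ B, x a) * ∑ a ∈ A, x a := by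
    rw [weightedInteredges_eq_sum_mul, sum_mul]
    exact sum_le_sum fun a ha => Nat.mul_le_mul_left _ (hv a (filter_subset _ _ ha))
  have hBA :
      weightedInteredges G x B A + weightedInteredges G x B B = weightedInteredges G x B S := by
    rw [← weightedInteredges_union_right x (disjoint_filter_filter_not S S _),
      filter_union_filter_not_eq]
  have hAB : weightedInteredges G x A B ≤ weightedInteredges G x B S :=
    (weightedInteredges_comm x).trans_le (weightedInteredges_mono_right x (filter_subset _ _))
  omega

lemma exists_weightedInteredges_le_comap_top (k : ℕ) {S : Finset ι}
    (hS : G.CliqueFreeOn S (k + 2)) :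
    ∃ g : ι → Fin (k + 1),
      weightedInteredges G x S S ≤ weightedInteredges ((⊤ : SimpleGraph _).comap g) x S S := by
  induction k generalizing S with
  | zero =>
    refine ⟨0, ?_⟩
    rw [weightedInteredges_eq_zero x fun a ha b hb hab =>
      (cliqueFreeOn_two G).1 hS ha hb (G.ne_of_adj hab) hab]
    exact Nat.zero_le _
  | succ k ih =>
    obtain rfl | hne := S.eq_empty_or_nonempty
    · exact ⟨0, by simp [weightedInteredges]⟩
    obtain ⟨v, hvS, hv⟩ := exists_max_image S (fun u => ∑ b ∈ S with G.Adj u b, x b) hne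
    set A := S.filter (G.Adj v)
    have hA : G.CliqueFreeOn A (k + 2) := by
      convert CliqueFreeOn.of_succ G hS hvS using 1
      ext; simp [A]
    obtain ⟨g', hg'⟩ := ih hA
    let g : ι → Fin (k + 2) := fun a => if a ∈ A then (g' a).castSucc else Fin.last _
    have hgA : ∀ a ∈ A, g a = (g' a).castSucc := fun a ha => if_pos ha
    have hgB : ∀ a ∈ S.filter (¬ G.Adj v ·), g a = Fin.last _ :=
      fun a ha => if_neg fun h => (mem_filter.1 ha).2 (mem_filter.1 h).2
    have hsplit : weightedInteredges ((⊤ : SimpleGraph _).comap g) x S S =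
        weightedInteredges ((⊤ : SimpleGraph _).comap g') x A A
          + 2 * ((∑ a ∈ S with ¬ G.Adj v a, x a) * ∑ a ∈ S with G.Adj v a, x a) := by
      rw [weightedInteredges_self_eq_filter_add_filter_not x (G.Adj v),
        weightedInteredges_congr x (s := A) (t := A) (G' := (⊤ : SimpleGraph _).comap g')
          fun a ha b hb => by simp [hgA a ha, hgA b hb],
        weightedInteredges_eq_mul x (s := A) (t := S.filter (¬ G.Adj v ·))
          fun a ha b hb => by simp [hgA a ha, hgB b hb],
        weightedInteredges_eq_mul x (s := S.filter (¬ G.Adj v ·)) (t := A)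
          fun a ha b hb => by simp [hgB a ha, hgA b hb, (Fin.castSucc_ne_last _).symm],
        weightedInteredges_eq_zero x (s := S.filter (¬ G.Adj v ·)) (t := S.filter (¬ G.Adj v ·))
          fun a ha b hb => by simp [hgB a ha, hgB b hb]]
      ring
    refine ⟨g, (weightedInteredges_le_of_max_weightedDegree x hv).trans ?_⟩
    rw [hsplit]
    exact Nat.add_le_add_right hg' _

end WeightedTuran

theorem Function.exists_surjective_refinement {α β : Type*} [Fintype α] [Fintype β]
    (f : α → β) (h : Fintype.card β ≤ Fintype.card α) :
    ∃ f' : α → β, Function.Surjective f' ∧ ∀ a b, f a ≠ f b → f' a ≠ f' b := by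
  by_cases hf : Function.Surjective f
  · exact ⟨f, hf, fun _ _ => id⟩
  obtain ⟨p, hp⟩ : ∃ p, ∀ a, f a ≠ p := by simpa [Function.Surjective] using hf
  have hinj : ¬ Function.Injective f := fun hinj =>
    hf ((Fintype.bijective_iff_injective_and_card f).2
      ⟨hinj, le_antisymm (Fintype.card_le_of_injective f hinj) h⟩).2
  obtain ⟨a₀, a₁, heq, hne⟩ : ∃ a₀ a₁, f a₀ = f a₁ ∧ a₀ ≠ a₁ := by
    simpa [Function.Injective] using hinj
  have hrefine : ∀ a b, f a ≠ f b → Function.update f a₀ p a ≠ Function.update f a₀ p b := by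
    intro a b hab
    simp only [Function.update_apply]
    split_ifs <;> simp_all [eq_comm]
  have hlt : (univ.image f).card < (univ.image (Function.update f a₀ p)).card := by
    refine card_lt_card ⟨fun b hb => ?_, fun hsub => ?_⟩
    · obtain ⟨a, -, rfl⟩ := mem_image.1 hb
      by_cases ha : a = a₀
      · subst ha
        exact mem_image.2 ⟨a₁, mem_univ _, by simp [hne.symm, heq]⟩
      · exact mem_image.2 ⟨a, mem_univ _, by simp [ha]⟩
    · obtain ⟨a, -, ha⟩ := mem_image.1 (hsub (mem_image_of_mem _ (mem_univ a₀)))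
      exact hp a (ha.trans (Function.update_self ..))
  obtain ⟨f', hsurj, hf'⟩ := exists_surjective_refinement (Function.update f a₀ p) h
  exact ⟨f', hsurj, fun a b hab => hf' a b (hrefine a b hab)⟩
termination_by Fintype.card β - (univ.image f).card
decreasing_by
  have := card_le_univ (univ.image (Function.update f a₀ p))
  omega

section Symmetrization

variable {ι : Type*} {V : ι → Type*}

def IsHomogeneousPart (H : SimpleGraph (Σ i, V i)) (i : ι) : Prop :=
  ∀ (u v : V i) (w : Σ i, V i), H.Adj ⟨i, u⟩ w ↔ H.Adj ⟨i, v⟩ w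

lemma IsHomogeneousPart.comap {H : SimpleGraph (Σ i, V i)} {i : ι} (h : IsHomogeneousPart H i)
    {ρ : (Σ i, V i) → Σ i, V i} (hρ : ∀ u : V i, ρ ⟨i, u⟩ = ⟨i, u⟩) :
    IsHomogeneousPart (H.comap ρ) i :=
  fun u v w => by simpa only [comap_adj, hρ] using h u v (ρ w)

lemma comap_le_completeMultipartiteGraph {H : SimpleGraph (Σ i, V i)}
    (hH : H ≤ completeMultipartiteGraph V) {ρ : (Σ i, V i) → Σ i, V i}
    (hρ : ∀ a, (ρ a).1 = a.1) : H.comap ρ ≤ completeMultipartiteGraph V :=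
  fun a b hab => by simpa [hρ] using hH hab

lemma eq_comap_sigmaFst_of_forall_isHomogeneousPart {H : SimpleGraph (Σ i, V i)}
    (h : ∀ i, IsHomogeneousPart H i) (c : ∀ i, V i) :
    H = (H.comap fun i => ⟨i, c i⟩).comap Sigma.fst := by
  ext ⟨i, u⟩ ⟨j, v⟩
  rw [comap_adj, comap_adj, h i u (c i), H.adj_comm, h j v (c j), H.adj_comm]

noncomputable def collapseTo (c a : Σ i, V i) : Σ i, V i :=
  if a.1 = c.1 then c else a

variable [Fintype ι] [∀ i, Fintype (V i)] (x : (Σ i, V i) → ℕ)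

lemma weightedInteredges_le_comap_collapseTo {H : SimpleGraph (Σ i, V i)}
    (hH : H ≤ completeMultipartiteGraph V) {c : Σ i, V i}
    (hc : ∀ a, a.1 = c.1 → ∑ b ∈ univ.filter (¬ ·.1 = c.1) with H.Adj a b, x b ≤
      ∑ b ∈ univ.filter (¬ ·.1 = c.1) with H.Adj c b, x b) :
    weightedInteredges H x univ univ ≤ weightedInteredges (H.comap (collapseTo c)) x univ univ := by
  set P := univ.filter fun a : Σ i, V i => a.1 = c.1
  set O := univ.filter fun a : Σ i, V i => ¬ a.1 = c.1
  have hsplit : ∀ K ≤ completeMultipartiteGraph V, weightedInteredges K x univ univ =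
      2 * weightedInteredges K x P O + weightedInteredges K x O O := by
    intro K hK
    rw [weightedInteredges_self_eq_filter_add_filter_not x (·.1 = c.1),
      weightedInteredges_eq_zero x (s := P) (t := P) fun a ha b hb hab =>
        hK hab ((mem_filter.1 ha).2.trans (mem_filter.1 hb).2.symm),
      weightedInteredges_comm x (s := O) (t := P)]
    ring
  have hP : ∀ a ∈ P, collapseTo c a = c := fun a ha => if_pos (mem_filter.1 ha).2
  have hO : ∀ a ∈ O, collapseTo c a = a := fun a ha => if_neg (mem_filter.1 ha).2
  have hPO : weightedInteredges H x P O ≤ weightedInteredges (H.comap (collapseTo c)) x P O := by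
    rw [weightedInteredges_eq_sum_mul, weightedInteredges_eq_sum_mul]
    refine sum_le_sum fun a ha => Nat.mul_le_mul_left _ ?_
    refine (hc a (mem_filter.1 ha).2).trans_eq
      (sum_congr (filter_congr fun b hb => ?_) fun _ _ => rfl)
    rw [comap_adj, hP a ha, hO b hb]
  have hOO : weightedInteredges H x O O = weightedInteredges (H.comap (collapseTo c)) x O O :=
    weightedInteredges_congr x fun a ha b hb => by rw [comap_adj, hO a ha, hO b hb]
  rw [hsplit H hH, hsplit _ (comap_le_completeMultipartiteGraph hH fun a => by
    unfold collapseTo; split_ifs with h <;> simp [h])]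
  omega

lemma exists_comap_isHomogeneousPart {H : SimpleGraph (Σ i, V i)}
    (hH : H ≤ completeMultipartiteGraph V) (m : ι) :
    ∃ ρ : (Σ i, V i) → Σ i, V i, (∀ a, (ρ a).1 = a.1) ∧ (∀ a, a.1 ≠ m → ρ a = a) ∧
      IsHomogeneousPart (H.comap ρ) m ∧
      weightedInteredges H x univ univ ≤ weightedInteredges (H.comap ρ) x univ univ := by
  cases isEmpty_or_nonempty (V m) with
  | inl _ => exact ⟨id, fun _ => rfl, fun _ _ => rfl, fun u => isEmptyElim u, le_refl _⟩
  | inr hm =>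
    obtain ⟨c, hcm, hc⟩ := exists_max_image (univ.filter fun a : Σ i, V i => a.1 = m)
      (fun a => ∑ b ∈ univ.filter (¬ ·.1 = m) with H.Adj a b, x b)
      ⟨⟨m, hm.some⟩, mem_filter.2 ⟨mem_univ _, rfl⟩⟩
    obtain rfl : c.1 = m := (mem_filter.1 hcm).2
    refine ⟨collapseTo c, fun a => ?_, fun a ha => if_neg ha, fun u v w => ?_,
      weightedInteredges_le_comap_collapseTo x hH fun a ha => hc a (mem_filter.2 ⟨mem_univ _, ha⟩)⟩
    · unfold collapseTo
      split_ifs with h <;> simp [h]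
    · simp [collapseTo]

lemma exists_forall_isHomogeneousPart {H : SimpleGraph (Σ i, V i)}
    (hH : H ≤ completeMultipartiteGraph V) :
    ∃ H' : SimpleGraph (Σ i, V i), H' ≤ completeMultipartiteGraph V ∧ Nonempty (H' →g H) ∧
      weightedInteredges H x univ univ ≤ weightedInteredges H' x univ univ ∧
      ∀ i, IsHomogeneousPart H' i := by
  suffices ∀ T : Finset ι, ∃ H' : SimpleGraph (Σ i, V i), H' ≤ completeMultipartiteGraph V ∧
      Nonempty (H' →g H) ∧ weightedInteredges H x univ univ ≤ weightedInteredges H' x univ univ ∧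
      ∀ i ∈ T, IsHomogeneousPart H' i by
    obtain ⟨H', h₁, h₂, h₃, h₄⟩ := this univ
    exact ⟨H', h₁, h₂, h₃, fun i => h₄ i (mem_univ i)⟩
  intro T
  induction T using Finset.induction_on with
  | empty => exact ⟨H, hH, ⟨Hom.id⟩, le_refl _, by simp⟩
  | insert m T _ ih =>
    obtain ⟨H', hH', ⟨f⟩, hw, hhom⟩ := ih
    obtain ⟨ρ, hρ₁, hρ₂, hρm, hwρ⟩ := exists_comap_isHomogeneousPart x hH' m
    refine ⟨H'.comap ρ, comap_le_completeMultipartiteGraph hH' hρ₁, ⟨f.comp (Hom.comap ρ H')⟩,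
      hw.trans hwρ, fun i hi => ?_⟩
    obtain rfl | hi := mem_insert.1 hi
    · exact hρm
    by_cases him : i = m
    · exact him ▸ hρm
    exact (hhom i hi).comap fun u => hρ₂ ⟨i, u⟩ him

theorem exists_cliqueFree_weightedInteredges_le (c : ∀ i, V i) {H : SimpleGraph (Σ i, V i)}
    (hH : H ≤ completeMultipartiteGraph V) {k : ℕ} (hfree : H.CliqueFree k) :
    ∃ H₀ : SimpleGraph ι, H₀.CliqueFree k ∧
      weightedInteredges H x univ univ ≤ weightedInteredges (H₀.comap Sigma.fst) x univ univ := by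
  obtain ⟨H', -, ⟨f⟩, hw, hhom⟩ := exists_forall_isHomogeneousPart x hH
  refine ⟨H'.comap fun i => ⟨i, c i⟩, (hfree.of_hom f).of_hom (Hom.comap _ H'), ?_⟩
  rwa [← eq_comap_sigmaFst_of_forall_isHomogeneousPart hhom c]

end Symmetrization

theorem ncard_edgeSet_le_fT {r k : ℕ} (hk : k + 1 ≤ r) {n : Fin r → ℕ} (hpos : ∀ i, 0 < n i)
    {H : SimpleGraph (Σ i, Fin (n i))} (hH : H ≤ completeMultipartite n)
    (hfree : H.CliqueFree (k + 2)) :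
    H.edgeSet.ncard ≤ fT (k + 2) n := by
  obtain ⟨H₀, hH₀, hw⟩ := exists_cliqueFree_weightedInteredges_le 1 (fun i => ⟨0, hpos i⟩) hH hfree
  obtain ⟨g, hg⟩ := exists_weightedInteredges_le_comap_top n k (S := univ) hH₀.cliqueFreeOn
  obtain ⟨g', hg'surj, hg'⟩ := Function.exists_surjective_refinement g (by simpa using hk)
  have key : 2 * H.edgeSet.ncard ≤ 2 * pairProdSum n g' :=
    calc 2 * H.edgeSet.ncard = weightedInteredges H 1 univ univ := two_mul_ncard_edgeSet H
      _ ≤ weightedInteredges (H₀.comap Sigma.fst) 1 univ univ := hw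
      _ = weightedInteredges H₀ n univ univ := by
        simpa using weightedInteredges_comap_sigmaFst (V := fun i => Fin (n i)) H₀
      _ ≤ weightedInteredges ((⊤ : SimpleGraph _).comap g) n univ univ := hg
      _ ≤ weightedInteredges ((⊤ : SimpleGraph _).comap g') n univ univ :=
        weightedInteredges_mono n fun a b hab => hg' a b hab
      _ = 2 * pairProdSum n g' := weightedInteredges_comap_top_eq_pairProdSum n g'
  exact (Nat.le_of_mul_le_mul_left key two_pos).trans
    (le_sup (f := pairProdSum n) (mem_filter.2 ⟨mem_univ _, hg'surj⟩))

theorem exists_cliqueFree_ncard_edgeSet_eq_pairProdSum {r k : ℕ} (n : Fin r → ℕ)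
    (g : Fin r → Fin (k + 1)) :
    ∃ H ≤ completeMultipartite n, H.CliqueFree (k + 2) ∧ H.edgeSet.ncard = pairProdSum n g := by
  refine ⟨((⊤ : SimpleGraph _).comap g).comap Sigma.fst, fun a b hab h => hab (congrArg g h),
    Colorable.cliqueFree ⟨Coloring.mk (g ∘ Sigma.fst) fun h => h⟩ (by omega), ?_⟩
  have h :=
    weightedInteredges_comap_sigmaFst (V := fun i => Fin (n i)) ((⊤ : SimpleGraph _).comap g)
  simp only [Fintype.card_fin] at h
  refine Nat.eq_of_mul_eq_mul_left two_pos ?_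
  rw [two_mul_ncard_edgeSet, h, weightedInteredges_comap_top_eq_pairProdSum]

/-- Bollobás–Erdős–Straus: for `r ≥ t ≥ 2` and positive part sizes,
`ex(K_{n_1,…,n_r}, K_t) = f_t(n_1,…,n_r)`. -/
theorem stmt_0 (r t : ℕ) (ht : 2 ≤ t) (htr : t ≤ r) (n : Fin r → ℕ)
    (hpos : ∀ i, 0 < n i) :
    exNum (completeMultipartite n) (completeGraph (Fin t)) = fT t n := by
  obtain ⟨k, rfl⟩ : ∃ k, t = k + 2 := ⟨t - 2, by omega⟩
  have hub : fT (k + 2) n ∈ upperBounds {m | ∃ H, H ≤ completeMultipartite n ∧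
      ¬ HasCopy H (completeGraph (Fin (k + 2))) ∧ m = H.edgeSet.ncard} := by
    rintro _ ⟨H, hH, hfree, rfl⟩
    exact ncard_edgeSet_le_fT (by omega) hpos hH ((not_hasCopy_completeGraph_iff H _).1 hfree)
  obtain ⟨g₀, hg₀, -⟩ := Function.exists_surjective_refinement (fun _ : Fin r => (0 : Fin (k + 1)))
    (by simp only [Fintype.card_fin]; omega)
  obtain ⟨g, -, hg⟩ := exists_mem_eq_sup _ ⟨g₀, mem_filter.2 ⟨mem_univ _, hg₀⟩⟩ (pairProdSum n)
  obtain ⟨H, hH, hfree, hcard⟩ := exists_cliqueFree_ncard_edgeSet_eq_pairProdSum n g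
  exact le_antisymm (csSup_le' hub) (le_csSup ⟨_, hub⟩
    ⟨H, hH, (not_hasCopy_completeGraph_iff H _).2 hfree, hg.trans hcard.symm⟩)
end

section
/- For any integers r ≥ 2 and 1 ≤ k ≤ n_1 ≤ n_2 ≤ ... ≤ n_r, ex(K_{n_1,...,n_r}, kK_r) = Σ_{1 ≤ i < j ≤ r} n_i n_j − n_1 n_2 + (k−1) n_2. -/
open SimpleGraph Finset

/-! The extremal graph deletes from `K_{n_1,…,n_r}` the edges between the two smallest parts,
except those at `k - 1` fixed vertices of the smallest part. Every `r`-clique meets both of these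
parts, so it contains one of the `k - 1` vertices, and there are no `k` disjoint `r`-cliques.

For the upper bound, a family of embeddings `F i : Fin n_1 ↪ Fin n_i` splits the vertices into
`n_1` disjoint transversals, at most `k - 1` of which are cliques of a `kK_r`-free graph `H`.
A non-edge of `H` between parts `p` and `q` lies in the `j`-th transversal of a proportion
`1 / (n_p n_q) ≤ 1 / (n_1 n_2)` of all pairs `(F, j)`. Averaging over all pairs `(F, j)`, `H`
misses at least `(n_1 - k + 1) n_2` edges of `K_{n_1,…,n_r}`. -/

theorem card_filter_mul_card_eq_of_forall_exists_equiv {α β : Type*} [Fintype α] [Fintype β]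
    [DecidableEq β] (f : α → β)
    (htrans : ∀ b b', ∃ e : α ≃ α, ∀ a, f (e a) = b' ↔ f a = b) (b : β) :
    #{a | f a = b} * Fintype.card β = Fintype.card α := by
  have hconst : ∀ b', #{a | f a = b'} = #{a | f a = b} := fun b' => by
    obtain ⟨e, he⟩ := htrans b b'
    exact (Finset.card_equiv e fun a => by simp [he]).symm
  rw [← Finset.card_univ (α := α), Finset.card_eq_sum_card_fiberwise (s := univ) (f := f)
    (t := univ) (by simp)]
  simp [hconst, mul_comm]

theorem card_filter_apply_eq_and_apply_eq_mul {ι β : Type*} [DecidableEq ι] [Fintype ι]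
    [Fintype β] [DecidableEq β] {γ : ι → Type*} [∀ i, Fintype (γ i)] [∀ i, DecidableEq (γ i)]
    {p q : ι} (hpq : p ≠ q) (u : γ p) (w : γ q) :
    #{x : (∀ i, β ↪ γ i) × β | x.1 p x.2 = u ∧ x.1 q x.2 = w}
        * (Fintype.card (γ p) * Fintype.card (γ q))
      = Fintype.card (∀ i, β ↪ γ i) * Fintype.card β := by
  -- transpositions inside the parts `p` and `q` carry any fiber onto any other
  have htrans : ∀ b b' : γ p × γ q, ∃ e : (∀ i, β ↪ γ i) × β ≃ (∀ i, β ↪ γ i) × β,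
      ∀ x, ((e x).1 p (e x).2, (e x).1 q (e x).2) = b' ↔ (x.1 p x.2, x.1 q x.2) = b := by
    rintro ⟨u, w⟩ ⟨u', w'⟩
    let τ : ∀ i, Equiv.Perm (γ i) :=
      Function.update (Function.update (fun _ => Equiv.refl _) p (Equiv.swap u u')) q
        (Equiv.swap w w')
    refine ⟨(Equiv.piCongrRight fun i => Equiv.embeddingCongr (Equiv.refl β) (τ i)).prodCongr
      (Equiv.refl β), fun x => ?_⟩
    have hτp : τ p = Equiv.swap u u' := by simp [τ, Function.update_of_ne hpq]
    have hτq : τ q = Equiv.swap w w' := by simp [τ]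
    simp [hτp, hτq, Equiv.swap_apply_eq_iff]
  simpa [Prod.ext_iff] using
    card_filter_mul_card_eq_of_forall_exists_equiv
      (fun x : (∀ i, β ↪ γ i) × β => (x.1 p x.2, x.1 q x.2)) htrans (u, w)

theorem Fin.card_filter_not_val_lt (m j : ℕ) : #{a : Fin m | ¬ (a : ℕ) < j} = m - j := by
  rw [filter_not, card_sdiff_of_subset (filter_subset _ _), Fin.card_filter_val_lt, card_univ,
    Fintype.card_fin]
  omega

section MultipartiteEdges

variable {ι : Type*} [Fintype ι] [LinearOrder ι] {X : ι → Type*} [∀ i, Fintype (X i)]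

theorem card_filter_fst_lt_fst :
    #{z : (Σ i, X i) × (Σ i, X i) | z.1.1 < z.2.1}
      = ∑ pq : ι × ι with pq.1 < pq.2, Fintype.card (X pq.1) * Fintype.card (X pq.2) := by
  simp only [card_filter, sum_filter, Fintype.sum_prod_type, Fintype.sum_sigma]
  simp only [sum_boole, filter_const, Nat.cast_id, sum_const, card_univ, smul_eq_mul, mul_sum]
  refine Finset.sum_congr rfl fun p _ => Finset.sum_congr rfl fun q _ => ?_
  split_ifs <;> simp

theorem ncard_edgeSet_eq_card_filter_lt_and_adj {H : SimpleGraph (Σ i, X i)}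
    [DecidableRel H.Adj] (hH : H ≤ completeMultipartiteGraph X) :
    H.edgeSet.ncard = #{z : (Σ i, X i) × (Σ i, X i) | z.1.1 < z.2.1 ∧ H.Adj z.1 z.2} := by
  rw [Set.ncard_eq_toFinset_card']
  refine (Finset.card_bij (fun z _ => s(z.1, z.2)) (by simp +contextual) ?_ ?_).symm
  · rintro ⟨x, y⟩ hxy ⟨x', y'⟩ hxy' he
    simp only [mem_filter, mem_univ, true_and] at hxy hxy'
    rcases Sym2.eq_iff.mp he with ⟨rfl, rfl⟩ | ⟨rfl, rfl⟩
    · rfl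
    · exact absurd hxy.1 hxy'.1.asymm
  · refine Sym2.ind fun x y hxy => ?_
    have hadj : H.Adj x y := by simpa using hxy
    have hne : x.1 ≠ y.1 := by simpa using hH hadj
    rcases hne.lt_or_gt with hlt | hgt
    · exact ⟨(x, y), by simp [hadj, hlt], rfl⟩
    · exact ⟨(y, x), by simp [hadj.symm, hgt], Sym2.eq_swap⟩

theorem ncard_edgeSet_add_card_nonAdj {H : SimpleGraph (Σ i, X i)}
    [DecidableRel H.Adj] (hH : H ≤ completeMultipartiteGraph X) :
    H.edgeSet.ncard + #{z : (Σ i, X i) × (Σ i, X i) | z.1.1 < z.2.1 ∧ ¬ H.Adj z.1 z.2}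
      = ∑ pq : ι × ι with pq.1 < pq.2, Fintype.card (X pq.1) * Fintype.card (X pq.2) := by
  rw [ncard_edgeSet_eq_card_filter_lt_and_adj hH, ← card_filter_fst_lt_fst,
    ← card_filter_add_card_filter_not (s := {z : (Σ i, X i) × (Σ i, X i) | z.1.1 < z.2.1})
      (fun z => H.Adj z.1 z.2)]
  simp only [filter_filter]

end MultipartiteEdges

theorem hasCopy_kCliques_iff {α : Type*} {G : SimpleGraph α} {k t : ℕ} :
    HasCopy G (kCliques k t) ↔
      ∃ f : Fin k × Fin t → α, Function.Injective f ∧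
        ∀ c, Pairwise fun i i' => G.Adj (f (c, i)) (f (c, i')) := by
  refine exists_congr fun f => and_congr_right fun _ => ⟨fun h c i i' hii' => ?_, ?_⟩
  · exact h (by simp [kCliques, hii'])
  · rintro h ⟨c, i⟩ ⟨c', i'⟩ hadj
    obtain ⟨hne, rfl | rfl⟩ := (fromRel_adj _ _ _).mp hadj <;>
      exact h _ fun hii' => hne (by rw [hii'])

section Extremal

variable {r : ℕ} (n : Fin r → ℕ) (k : ℕ) (i₀ i₁ : Fin r)

def extremalGraph : SimpleGraph (Σ i : Fin r, Fin (n i)) :=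
  completeMultipartite n \ fromRel fun x y => x.1 = i₀ ∧ k - 1 ≤ (x.2 : ℕ) ∧ y.1 = i₁

variable {n k i₀ i₁}

theorem card_nonAdj_extremalGraph [DecidableRel (extremalGraph n k i₀ i₁).Adj] (h01 : i₀ < i₁) :
    #{z : (Σ i : Fin r, Fin (n i)) × (Σ i : Fin r, Fin (n i)) |
        z.1.1 < z.2.1 ∧ ¬ (extremalGraph n k i₀ i₁).Adj z.1 z.2}
      = (n i₀ - (k - 1)) * n i₁ := by
  have hfilter : ∀ z : (Σ i : Fin r, Fin (n i)) × (Σ i : Fin r, Fin (n i)),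
      z.1.1 < z.2.1 ∧ ¬ (extremalGraph n k i₀ i₁).Adj z.1 z.2 ↔
        z.1.1 = i₀ ∧ (¬ (z.1.2 : ℕ) < k - 1 ∧ z.2.1 = i₁) := by
    rintro ⟨⟨p, a⟩, ⟨q, b⟩⟩
    simp only [extremalGraph, sdiff_adj, fromRel_adj, comap_adj, top_adj]
    grind
  rw [filter_congr fun z _ => hfilter z]
  simp only [card_filter, Fintype.sum_prod_type, Fintype.sum_sigma, ite_and, sum_ite_irrel,
    sum_ite_eq', mem_univ, if_true, sum_const_zero]
  rw [← sum_filter, sum_congr rfl fun a _ => (by simp [apply_ite card] : _ = n i₁), sum_const,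
    Fin.card_filter_not_val_lt, smul_eq_mul]

theorem extremalGraph_le : extremalGraph n k i₀ i₁ ≤ completeMultipartite n := sdiff_le

theorem exists_lt_mem_range_of_pairwise_adj_extremalGraph (h01 : i₀ ≠ i₁)
    {g : Fin r → Σ i : Fin r, Fin (n i)}
    (hg : Pairwise fun i i' => (extremalGraph n k i₀ i₁).Adj (g i) (g i')) :
    ∃ a : Fin (n i₀), (a : ℕ) < k - 1 ∧ ⟨i₀, a⟩ ∈ Set.range g := by
  have hsurj : Function.Surjective fun i => (g i).1 :=
    Finite.surjective_of_injective fun i i' h => by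
      by_contra hne
      exact (hg hne).1 h
  obtain ⟨i, hi⟩ := hsurj i₀
  obtain ⟨i', hi'⟩ := hsurj i₁
  have hne : i ≠ i' := by rintro rfl; exact h01 (hi.symm.trans hi')
  have hadj := hg hne
  rcases hgi : g i with ⟨p, a⟩
  rcases hgi' : g i' with ⟨q, b⟩
  simp only [hgi, hgi'] at hi hi' hadj
  subst hi hi'
  refine ⟨a, ?_, i, hgi⟩
  by_contra hge
  exact hadj.2 ((fromRel_adj _ _ _).mpr
    ⟨fun h => h01 (congrArg Sigma.fst h), Or.inl ⟨rfl, not_lt.mp hge, rfl⟩⟩)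

theorem not_hasCopy_extremalGraph (hk : 1 ≤ k) (h01 : i₀ ≠ i₁) :
    ¬ HasCopy (extremalGraph n k i₀ i₁) (kCliques k r) := by
  rw [hasCopy_kCliques_iff]
  rintro ⟨f, hf, hclique⟩
  choose a ha hmem using fun c =>
    exists_lt_mem_range_of_pairwise_adj_extremalGraph h01 (hclique c)
  choose i hi using hmem
  have hinj : Function.Injective fun c => (⟨a c, ha c⟩ : Fin (k - 1)) := fun c c' h => by
    have hac : a c = a c' := Fin.ext (Fin.mk.inj_iff.mp h)
    have : f (c, i c) = f (c', i c') := (hi c).trans (hac ▸ (hi c').symm)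
    exact congrArg Prod.fst (hf this)
  have := Fintype.card_le_of_injective _ hinj
  simp only [Fintype.card_fin] at this
  omega

end Extremal

section Transversals

variable {r m k : ℕ} {n : Fin r → ℕ} {H : SimpleGraph (Σ i : Fin r, Fin (n i))} [DecidableRel H.Adj]

theorem card_filter_transversal_isClique_lt (hH : ¬ HasCopy H (kCliques k r))
    (F : ∀ i, Fin m ↪ Fin (n i)) :
    #{j | ∀ p q, p ≠ q → H.Adj ⟨p, F p j⟩ ⟨q, F q j⟩} < k := by
  by_contra! hk
  obtain ⟨T, hT, hTcard⟩ := exists_subset_card_eq hk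
  let e : Fin k ≃ T := (T.equivFinOfCardEq hTcard).symm
  refine hH (hasCopy_kCliques_iff.mpr ⟨fun x => ⟨x.2, F x.2 (e x.1)⟩, ?_, fun c p q hpq => ?_⟩)
  · rintro ⟨c, p⟩ ⟨c', q⟩ h
    simp only [Sigma.mk.inj_iff] at h
    obtain ⟨rfl, h⟩ := h
    rw [e.injective (Subtype.ext ((F p).injective (eq_of_heq h)))]
  · have := hT (e c).2
    rw [mem_filter] at this
    exact this.2 p q hpq

theorem card_mul_le_card_filter_not_transversal_isClique (hH : ¬ HasCopy H (kCliques k r)) :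
    (m - (k - 1)) * Fintype.card (∀ i, Fin m ↪ Fin (n i))
      ≤ #{x : (∀ i, Fin m ↪ Fin (n i)) × Fin m |
          ¬ ∀ p q, p ≠ q → H.Adj ⟨p, x.1 p x.2⟩ ⟨q, x.1 q x.2⟩} := by
  rw [card_filter, Fintype.sum_prod_type, mul_comm, ← card_univ, ← smul_eq_mul, ← sum_const]
  refine sum_le_sum fun F _ => ?_
  dsimp only
  rw [← card_filter]
  have hsplit := card_filter_add_card_filter_not (s := univ)
    (fun j : Fin m => ∀ p q, p ≠ q → H.Adj ⟨p, F p j⟩ ⟨q, F q j⟩)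
  have := card_filter_transversal_isClique_lt hH F
  rw [card_univ, Fintype.card_fin] at hsplit
  omega

theorem card_filter_not_transversal_isClique_le_sum :
    #{x : (∀ i, Fin m ↪ Fin (n i)) × Fin m |
        ¬ ∀ p q, p ≠ q → H.Adj ⟨p, x.1 p x.2⟩ ⟨q, x.1 q x.2⟩}
      ≤ ∑ z ∈ {z : (Σ i : Fin r, Fin (n i)) × (Σ i : Fin r, Fin (n i)) |
            z.1.1 < z.2.1 ∧ ¬ H.Adj z.1 z.2},
          #{x : (∀ i, Fin m ↪ Fin (n i)) × Fin m |
            x.1 z.1.1 x.2 = z.1.2 ∧ x.1 z.2.1 x.2 = z.2.2} := by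
  refine (card_le_card fun x hx => ?_).trans card_biUnion_le
  simp only [mem_filter, mem_univ, true_and, not_forall] at hx
  obtain ⟨p, q, hpq, hnadj⟩ := hx
  simp only [mem_biUnion, mem_filter, mem_univ, true_and]
  rcases hpq.lt_or_gt with hlt | hgt
  · exact ⟨(⟨p, x.1 p x.2⟩, ⟨q, x.1 q x.2⟩), ⟨hlt, hnadj⟩, rfl, rfl⟩
  · exact ⟨(⟨q, x.1 q x.2⟩, ⟨p, x.1 p x.2⟩), ⟨hgt, fun h => hnadj h.symm⟩, rfl, rfl⟩

end Transversals

section UpperBound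

variable {r k : ℕ} {n : Fin r → ℕ} {H : SimpleGraph (Σ i : Fin r, Fin (n i))} [DecidableRel H.Adj]

theorem mul_card_filter_apply_eq_and_apply_eq_le {i₀ i₁ : Fin r}
    (hprod : ∀ p q, p ≠ q → n i₀ * n i₁ ≤ n p * n q)
    {z : (Σ i : Fin r, Fin (n i)) × (Σ i : Fin r, Fin (n i))} (hz : z.1.1 ≠ z.2.1) :
    n i₀ * n i₁ * #{x : (∀ i, Fin (n i₀) ↪ Fin (n i)) × Fin (n i₀) |
        x.1 z.1.1 x.2 = z.1.2 ∧ x.1 z.2.1 x.2 = z.2.2}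
      ≤ Fintype.card (∀ i, Fin (n i₀) ↪ Fin (n i)) * n i₀ := by
  have := card_filter_apply_eq_and_apply_eq_mul (β := Fin (n i₀)) (γ := fun i => Fin (n i)) hz
    z.1.2 z.2.2
  simp only [Fintype.card_fin] at this
  rw [← this, mul_comm]
  exact Nat.mul_le_mul_left _ (hprod _ _ hz)

theorem card_mul_le_card_nonAdj_of_not_hasCopy {i₀ i₁ : Fin r} (hmin : ∀ i, n i₀ ≤ n i)
    (hprod : ∀ p q, p ≠ q → n i₀ * n i₁ ≤ n p * n q) (hH : ¬ HasCopy H (kCliques k r)) :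
    (n i₀ - (k - 1)) * n i₁
      ≤ #{z : (Σ i : Fin r, Fin (n i)) × (Σ i : Fin r, Fin (n i)) |
          z.1.1 < z.2.1 ∧ ¬ H.Adj z.1 z.2} := by
  set N := Fintype.card (∀ i, Fin (n i₀) ↪ Fin (n i))
  set M := ({z : (Σ i : Fin r, Fin (n i)) × (Σ i : Fin r, Fin (n i)) |
    z.1.1 < z.2.1 ∧ ¬ H.Adj z.1 z.2} : Finset _)
  have hN : 0 < N := Fintype.card_pos_iff.mpr ⟨fun i => Fin.castLEEmb (hmin i)⟩
  rcases (n i₀).eq_zero_or_pos with h0 | h0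
  · simp [h0]
  have hhits := sum_le_card_nsmul M _ _ fun z hz =>
    mul_card_filter_apply_eq_and_apply_eq_le hprod (mem_filter.mp hz).2.1.ne
  rw [← mul_sum, smul_eq_mul] at hhits
  refine le_of_mul_le_mul_left (a := n i₀ * N) ?_ (Nat.mul_pos h0 hN)
  calc n i₀ * N * ((n i₀ - (k - 1)) * n i₁)
      = n i₀ * n i₁ * ((n i₀ - (k - 1)) * N) := by ring
    _ ≤ n i₀ * n i₁ * _ :=
      Nat.mul_le_mul_left _ ((card_mul_le_card_filter_not_transversal_isClique hH).trans
        card_filter_not_transversal_isClique_le_sum)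
    _ ≤ _ := hhits
    _ = _ := by ring

end UpperBound

theorem Monotone.apply_zero_mul_apply_one_le {r : ℕ} {n : Fin r → ℕ} (hn : Monotone n) (h1 : 1 < r)
    {p q : Fin r} (hpq : p ≠ q) : n ⟨0, by omega⟩ * n ⟨1, h1⟩ ≤ n p * n q := by
  have hle : ∀ {p q : Fin r}, p < q → n ⟨0, by omega⟩ * n ⟨1, h1⟩ ≤ n p * n q := fun hlt =>
    Nat.mul_le_mul (hn (Fin.mk_le_of_le_val (Nat.zero_le _)))
      (hn (Fin.mk_le_of_le_val (by omega)))
  rcases hpq.lt_or_gt with hlt | hgt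
  · exact hle hlt
  · exact mul_comm (n q) (n p) ▸ hle hgt

/-- De Silva et al.: for `r ≥ 2` and `1 ≤ k ≤ n_1 ≤ ⋯ ≤ n_r`,
`ex(K_{n_1,…,n_r}, kK_r) = Σ_{i<j} n_i n_j − n_1 n_2 + (k−1) n_2`. -/
theorem stmt_1 (r k : ℕ) (hr : 2 ≤ r) (n : Fin r → ℕ) (hmono : Monotone n)
    (hk : 1 ≤ k) (hkn : k ≤ n ⟨0, by omega⟩) :
    exNum (completeMultipartite n) (kCliques k r) =
      (∑ p ∈ Finset.univ.filter (fun p : Fin r × Fin r => p.1 < p.2), n p.1 * n p.2)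
        - n ⟨0, by omega⟩ * n ⟨1, by omega⟩ + (k - 1) * n ⟨1, by omega⟩ := by
  classical
  set i₀ : Fin r := ⟨0, by omega⟩
  set i₁ : Fin r := ⟨1, by omega⟩
  have h01 : i₀ < i₁ := Fin.mk_lt_mk.mpr zero_lt_one
  have hmin : ∀ i, n i₀ ≤ n i := fun i => hmono (Fin.mk_le_of_le_val (Nat.zero_le _))
  have hprod : ∀ p q, p ≠ q → n i₀ * n i₁ ≤ n p * n q := fun p q hpq =>
    hmono.apply_zero_mul_apply_one_le _ hpq
  have htotal : n i₀ * n i₁ ≤ ∑ p : Fin r × Fin r with p.1 < p.2, n p.1 * n p.2 :=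
    single_le_sum (f := fun p : Fin r × Fin r => n p.1 * n p.2) (fun _ _ => Nat.zero_le _)
      (a := (i₀, i₁)) (mem_filter.mpr ⟨mem_univ _, h01⟩)
  have hsub : (n i₀ - (k - 1)) * n i₁ = n i₀ * n i₁ - (k - 1) * n i₁ := Nat.sub_mul _ _ _
  have hle : (k - 1) * n i₁ ≤ n i₀ * n i₁ := Nat.mul_le_mul_right _ (by omega)
  refine IsGreatest.csSup_eq ⟨⟨extremalGraph n k i₀ i₁, extremalGraph_le,
    not_hasCopy_extremalGraph hk h01.ne, ?_⟩, ?_⟩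
  · have hcount := ncard_edgeSet_add_card_nonAdj (H := extremalGraph n k i₀ i₁) extremalGraph_le
    rw [card_nonAdj_extremalGraph h01] at hcount
    simp only [Fintype.card_fin] at hcount
    omega
  · rintro _ ⟨H, hH, hcopy, rfl⟩
    have hcount := ncard_edgeSet_add_card_nonAdj hH
    have hbound := card_mul_le_card_nonAdj_of_not_hasCopy hmin hprod hcopy
    simp only [Fintype.card_fin] at hcount
    omega
end

section
/- Let k ≥ 2 and t ≥ 3 be integers, and let n_1, n_2, ..., n_r be positive integers with r ≥ t, n_1 ≥ k, n_1 ≤ n_i for all i ≥ 2, and n = Σ_{i=1}^r n_i. Then ex(K_{n_1,...,n_r}, kK_t) ≥ (k−1)(n − n_1) + f_t(n_1−(k−1), n_2, ..., n_r). -/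
open SimpleGraph Finset

lemma le_exNum {V β : Type*} [Fintype V] {G H : SimpleGraph V} {F : SimpleGraph β}
    (hHG : H ≤ G) (hH : ¬ HasCopy H F) : H.edgeSet.ncard ≤ exNum G F :=
  le_csSup ⟨G.edgeSet.ncard, by
      rintro m ⟨H', hH', -, rfl⟩
      exact Set.ncard_le_ncard (edgeSet_mono hH')⟩ ⟨H, hHG, hH, rfl⟩

lemma kCliques_adj {k t : ℕ} (a : Fin k) {i j : Fin t} (hij : i ≠ j) :
    (kCliques k t).Adj (a, i) (a, j) := by
  simp [kCliques, hij]

/-- Outside `S` the colouring `c` is proper, so by pigeonhole every `K_t` meets `S`; the `k`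
disjoint cliques of a copy of `kK_t` would then need `k` vertices of `S`. -/
theorem not_hasCopy_kCliques {V : Type*} {H : SimpleGraph V} {k t m : ℕ} (S : Finset V)
    (c : V → Fin m) (hS : #S < k) (hm : m < t)
    (hc : ∀ ⦃u v⦄, H.Adj u v → u ∉ S → v ∉ S → c u ≠ c v) :
    ¬ HasCopy H (kCliques k t) := by
  rintro ⟨f, hf, hadj⟩
  have hmeet : ∀ a : Fin k, ∃ i : Fin t, f (a, i) ∈ S := by
    intro a
    by_contra! hout
    have hinj : Function.Injective (fun i : Fin t => c (f (a, i))) := by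
      intro i j hij
      by_contra hne
      exact hc (hadj (kCliques_adj a hne)) (hout i) (hout j) hij
    have := Fintype.card_le_of_injective _ hinj
    simp only [Fintype.card_fin] at this
    omega
  choose s hs using hmeet
  have hle : #(univ : Finset (Fin k)) ≤ #S :=
    card_le_card_of_injOn (fun a => f (a, s a)) (fun a _ => hs a)
      (fun a _ b _ hab => congrArg Prod.fst (hf hab))
  simp only [card_univ, Fintype.card_fin] at hle
  omega

lemma card_le_ncard_edgeSet {V : Type*} [Finite V] {H : SimpleGraph V} (A : Finset (V × V))
    (hadj : ∀ z ∈ A, H.Adj z.1 z.2) (hswap : ∀ z ∈ A, z.swap ∉ A) :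
    #A ≤ H.edgeSet.ncard := by
  classical
  have hinj : Set.InjOn (fun z : V × V => s(z.1, z.2)) (A : Set (V × V)) := by
    intro z hz w hw hzw
    rcases Sym2.mk_eq_mk_iff.1 hzw with h | rfl
    · exact h
    · exact absurd hz (hswap _ hw)
  calc #A = #(A.image (fun z : V × V => s(z.1, z.2))) := (card_image_of_injOn hinj).symm
    _ = (↑(A.image (fun z : V × V => s(z.1, z.2))) : Set (Sym2 V)).ncard :=
        (Set.ncard_coe_finset _).symm
    _ ≤ H.edgeSet.ncard := Set.ncard_le_ncard (by
        intro e he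
        obtain ⟨z, hz, rfl⟩ := mem_image.1 he
        exact hadj z hz)

lemma card_filter_lt_color {V : Type*} [DecidableEq V] {m : ℕ} (U : Finset V) (c : V → Fin m) :
    #{z ∈ U ×ˢ U | c z.1 < c z.2} =
      ∑ p : Fin m × Fin m with p.1 < p.2, #{v ∈ U | c v = p.1} * #{v ∈ U | c v = p.2} := by
  rw [card_eq_sum_card_fiberwise (f := fun z => (c z.1, c z.2))
    (t := {p : Fin m × Fin m | p.1 < p.2}) (by intro z hz; simpa using (mem_filter.1 hz).2)]
  refine sum_congr rfl fun p hp => ?_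
  rw [← card_product]
  congr 1
  ext ⟨u, v⟩
  have := (mem_filter.1 hp).2
  simp only [mem_filter, mem_product, Prod.ext_iff]
  grind

lemma card_filter_sigma {ι : Type*} {κ : ι → Type*} [Fintype ι] [∀ i, Fintype (κ i)]
    (P : (Σ i, κ i) → Prop) [DecidablePred P] :
    #{v | P v} = ∑ i, #{j : κ i | P ⟨i, j⟩} := by
  simp only [card_filter, Fintype.sum_sigma]

section LowerBoundGraph

variable {r : ℕ} (n : Fin r → ℕ) (i₀ : Fin r) (s : ℕ)

def apexVertices : Finset (Σ i, Fin (n i)) := {v | v.1 = i₀ ∧ (v.2 : ℕ) < s}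

/-- The `s` apex vertices of part `i₀` are joined to all other parts; the remaining vertices
span the complete `m`-partite graph whose parts are the unions of the parts in a fibre of `g`. -/
def lowerBoundGraph {m : ℕ} (g : Fin r → Fin m) : SimpleGraph (Σ i, Fin (n i)) :=
  completeMultipartite n ⊓ fromRel (fun u v => u ∈ apexVertices n i₀ s ∨ g u.1 ≠ g v.1)

variable {n i₀ s}

lemma card_apexVertices (hsn : s ≤ n i₀) : #(apexVertices n i₀ s) = s := by
  rw [apexVertices, card_filter_sigma, sum_eq_single i₀ (fun i _ hi => by simp [hi]) (by simp)]
  simp [Fin.card_filter_val_lt, hsn]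

lemma card_filter_fst_ne :
    #{v : Σ i, Fin (n i) | v.1 ≠ i₀} = (∑ i, n i) - n i₀ := by
  have hpart : #{v : Σ i, Fin (n i) | v.1 = i₀} = n i₀ := by
    rw [card_filter_sigma, sum_eq_single i₀ (fun i _ hi => by simp [hi]) (by simp)]
    simp
  have htotal := card_filter_add_card_filter_not (s := univ) (fun v : Σ i, Fin (n i) => v.1 = i₀)
  simp only [card_univ, Fintype.card_sigma, Fintype.card_fin] at htotal
  simp only [ne_eq]
  omega

lemma card_notMem_apexVertices (hsn : s ≤ n i₀) (i : Fin r) :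
    #{j : Fin (n i) | ⟨i, j⟩ ∉ apexVertices n i₀ s} =
      Function.update n i₀ (n i₀ - s) i := by
  by_cases hi : i = i₀
  · subst hi
    have htotal := card_filter_add_card_filter_not (s := univ) (fun j : Fin (n i) => (j : ℕ) < s)
    simp only [card_univ, Fintype.card_fin, Fin.card_filter_val_lt, min_eq_right hsn] at htotal
    simp only [apexVertices, mem_filter, mem_univ, true_and, Function.update_self]
    omega
  · simp [apexVertices, hi]

lemma card_colorClass {m : ℕ} (hsn : s ≤ n i₀) (g : Fin r → Fin m) (p : Fin m) :
    #{v ∈ (apexVertices n i₀ s)ᶜ | g v.1 = p} =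
      partSum (Function.update n i₀ (n i₀ - s)) g p := by
  have hfilter : {v ∈ (apexVertices n i₀ s)ᶜ | g v.1 = p} =
      ({v | v ∉ apexVertices n i₀ s ∧ g v.1 = p} : Finset _) := by
    ext; simp
  rw [hfilter, card_filter_sigma, partSum, sum_filter]
  refine sum_congr rfl fun i _ => ?_
  by_cases hi : g i = p
  · simp only [hi, and_true, if_true]
    exact card_notMem_apexVertices hsn i
  · simp [hi]

lemma not_hasCopy_lowerBoundGraph {k t m : ℕ} (hs : s < k) (hm : m < t) (hsn : s ≤ n i₀)
    (g : Fin r → Fin m) : ¬ HasCopy (lowerBoundGraph n i₀ s g) (kCliques k t) := by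
  refine not_hasCopy_kCliques (apexVertices n i₀ s) (fun v => g v.1)
    (by rwa [card_apexVertices hsn]) hm fun u v huv hu hv => ?_
  simp only [lowerBoundGraph, inf_adj, fromRel_adj, hu, hv, false_or] at huv
  exact huv.2.2.elim id Ne.symm

lemma le_ncard_edgeSet_lowerBoundGraph {m : ℕ} (hsn : s ≤ n i₀) (g : Fin r → Fin m) :
    s * ((∑ i, n i) - n i₀) + pairProdSum (Function.update n i₀ (n i₀ - s)) g ≤
      (lowerBoundGraph n i₀ s g).edgeSet.ncard := by
  set S := apexVertices n i₀ s
  have hS : ∀ v ∈ S, v.1 = i₀ := fun v hv => (mem_filter.1 hv).2.1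
  set A₁ := S ×ˢ ({v | v.1 ≠ i₀} : Finset (Σ i, Fin (n i)))
  set A₂ := {z ∈ Sᶜ ×ˢ Sᶜ | g z.1.1 < g z.2.1}
  have hmem : ∀ z, z ∈ A₁ ∪ A₂ ↔
      z.1 ∈ S ∧ z.2.1 ≠ i₀ ∨ (z.1 ∉ S ∧ z.2 ∉ S) ∧ g z.1.1 < g z.2.1 := by
    intro z; simp [A₁, A₂]
  have hcard : #(A₁ ∪ A₂) = s * ((∑ i, n i) - n i₀) +
      pairProdSum (Function.update n i₀ (n i₀ - s)) g := by
    have hdisj : Disjoint A₁ A₂ := disjoint_left.2 fun z h₁ h₂ =>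
      (mem_compl.1 (mem_product.1 (mem_filter.1 h₂).1).1) (mem_product.1 h₁).1
    rw [card_union_of_disjoint hdisj, card_product, card_apexVertices hsn, card_filter_fst_ne,
      show #A₂ = _ from card_filter_lt_color Sᶜ (fun v => g v.1), pairProdSum]
    simp only [S, card_colorClass hsn]
  rw [← hcard]
  refine card_le_ncard_edgeSet _ (fun z hz => ?_) (fun z hz hswap => ?_)
  · rw [hmem] at hz
    simp only [lowerBoundGraph, inf_adj, fromRel_adj, comap_adj, top_adj]
    rcases hz with ⟨hz₁, hz₂⟩ | ⟨hz, hlt⟩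
    · have hpart := hS _ hz₁
      exact ⟨by rwa [hpart, ne_comm], fun h => hz₂ (by rw [← h, hpart]),
        Or.inl (Or.inl hz₁)⟩
    · have hne : z.1.1 ≠ z.2.1 := fun h => hlt.ne (by rw [h])
      exact ⟨hne, fun h => hne (by rw [h]), Or.inl (Or.inr hlt.ne)⟩
  · rw [hmem] at hz hswap
    have hS₁ := hS z.1
    have hS₂ := hS z.2
    simp only [Prod.fst_swap, Prod.snd_swap] at hswap
    grind

end LowerBoundGraph

theorem add_pairProdSum_le_exNum {r k t s m : ℕ} {n : Fin r → ℕ} (i₀ : Fin r) (hs : s < k)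
    (hm : m < t) (hsn : s ≤ n i₀) (g : Fin r → Fin m) :
    s * ((∑ i, n i) - n i₀) + pairProdSum (Function.update n i₀ (n i₀ - s)) g ≤
      exNum (completeMultipartite n) (kCliques k t) :=
  (le_ncard_edgeSet_lowerBoundGraph hsn g).trans
    (le_exNum inf_le_left (not_hasCopy_lowerBoundGraph hs hm hsn g))

/-- Lower bound: for `k ≥ 2`, `t ≥ 3`, `r ≥ t`, positive `n_i` with `n_1 ≥ k` and
`n_1 ≤ n_i` for all `i`, with `n = Σ n_i`,
`ex(K_{n_1,…,n_r}, kK_t) ≥ (k−1)(n − n_1) + f_t(n_1−(k−1), n_2, …, n_r)`. -/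
theorem stmt_4 (k t r : ℕ) (hk : 2 ≤ k) (ht : 3 ≤ t) (htr : t ≤ r)
    (n : Fin r → ℕ)
    (hkn : k ≤ n ⟨0, by omega⟩) :
    (k - 1) * ((∑ i, n i) - n ⟨0, by omega⟩) +
        fT t (Function.update n ⟨0, by omega⟩ (n ⟨0, by omega⟩ - (k - 1))) ≤
      exNum (completeMultipartite n) (kCliques k t) := by
  have hpair (g : Fin r → Fin (t - 1)) := add_pairProdSum_le_exNum (k := k) (t := t) (n := n)
    ⟨0, by omega⟩ (s := k - 1) (by omega) (by omega) (by omega) g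
  have hfT : fT t (Function.update n ⟨0, by omega⟩ (n ⟨0, by omega⟩ - (k - 1))) ≤
      exNum (completeMultipartite n) (kCliques k t) -
        (k - 1) * ((∑ i, n i) - n ⟨0, by omega⟩) :=
    Finset.sup_le fun g _ => Nat.le_sub_of_add_le' (hpair g)
  -- rules out a truncated subtraction in `hfT`
  have := hpair fun _ => ⟨0, by omega⟩
  omega
end

section
/- Let k, r, t be integers with r > t ≥ 3 and k ≥ 2, and let n_1, ..., n_r be integers with k ≤ n_1 ≤ n_2 ≤ ... ≤ n_r and n = Σ_{i=1}^r n_i. For a nonempty set I ⊆ {1,...,r} write n_I = Σ_{i∈I} n_i and m_I = min_{i∈I} n_i, and for a partition P of {1,...,r} write n_P = max_{I∈P} (n_I − m_I). Then the maximum, over all partitions P of {1,...,r} into t−1 nonempty parts, of (k−1)·n_P + Σ_{I ≠ I' ∈ P} n_I·n_{I'} (the sum over unordered pairs of distinct parts) equals (k−1)(n − n_1) + f_t(n_1−(k−1), n_2, ..., n_r). -/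
open SimpleGraph Finset

/-!
Write `N = ∑ n` and `Π(g) = ∑_{I<J} n_I n_J` for a partition `g`. Lowering the smallest entry
`n_z` by `K` lowers `Π(g)` by `K (N - n_I)`, `I` the part containing `z`, so the right-hand side is
the maximum over `g` of `Π(g) + K (n_I - n_z) = Π(g) + K (n_I - m_I)`, which is at most the
left-hand side. Conversely, exchanging `z` with the minimum of a part `J` of maximal excess
`n_J - m_J` moves weight into the part with less remaining weight, so it does not decrease `Π`,
and it puts `z` into `J`: every term of the left-hand side is attained on the right.
-/

open Function

section PairProd

variable {ι : Type*} [Fintype ι] [LinearOrder ι]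

def pairProd (S : ι → ℕ) : ℕ :=
  ∑ p ∈ Finset.univ.filter (fun p : ι × ι => p.1 < p.2), S p.1 * S p.2

theorem two_mul_pairProd_add_sum_sq (S : ι → ℕ) :
    2 * pairProd S + ∑ i, S i ^ 2 = (∑ i, S i) ^ 2 := by
  have hsplit : ∀ i j, S i * S j = (if i < j then S i * S j else 0) +
      (if j < i then S j * S i else 0) + (if i = j then S i ^ 2 else 0) := by
    intro i j
    rcases lt_trichotomy i j with h | rfl | h
    · simp [h, h.not_gt, h.ne]
    · simp [sq]
    · simp [h, h.not_gt, h.ne', mul_comm]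
  rw [sq (∑ i, S i), Finset.sum_mul_sum,
    Finset.sum_congr rfl fun i _ => Finset.sum_congr rfl fun j _ => hsplit i j]
  simp only [Finset.sum_add_distrib]
  rw [Finset.sum_comm (f := fun i j => if j < i then S j * S i else 0)]
  simp only [Finset.sum_ite_eq, Finset.mem_univ, if_true, pairProd, Finset.sum_filter,
    ← Finset.univ_product_univ, Finset.sum_product]
  ring

theorem pairProd_add_mul_eq_of_add_eq {S T : ι → ℕ} {p : ι} {K : ℕ}
    (hT : ∀ j ≠ p, T j = S j) (hp : T p + K = S p) :
    pairProd T + K * (∑ j, S j - S p) = pairProd S := by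
  have hS := congrArg (Nat.cast : ℕ → ℤ) (two_mul_pairProd_add_sum_sq S)
  have hT' := congrArg (Nat.cast : ℕ → ℤ) (two_mul_pairProd_add_sum_sq T)
  push_cast at hS hT'
  have hdiff : ∀ f : ℕ → ℤ, ∑ j, f (T j) = ∑ j, f (S j) + (f (T p) - f (S p)) := by
    intro f
    rw [← sub_eq_iff_eq_add', ← Finset.sum_sub_distrib]
    exact Fintype.sum_eq_single p fun j hj => by rw [hT j hj, sub_self]
  have hsum := hdiff (fun m => m)
  have hsq := hdiff (fun m => (m : ℤ) ^ 2)
  have hle : S p ≤ ∑ j, S j := Finset.single_le_sum (fun _ _ => Nat.zero_le _) (mem_univ p)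
  have hTp : (T p : ℤ) = S p - K := by omega
  rw [hsum, hsq, hTp] at hT'
  zify [hle]
  have h2 : 2 * ((pairProd T : ℤ) + K * (∑ j, (S j : ℤ) - S p)) = 2 * pairProd S := by
    linear_combination hT' - hS
  omega

theorem pairProd_add_mul_eq_add_mul {S T : ι → ℕ} {p q : ι} (hpq : p ≠ q)
    (hT : ∀ j, j ≠ p → j ≠ q → T j = S j) (hsum : T p + T q = S p + S q) :
    pairProd T + S p * S q = pairProd S + T p * T q := by
  have hS := congrArg (Nat.cast : ℕ → ℤ) (two_mul_pairProd_add_sum_sq S)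
  have hT' := congrArg (Nat.cast : ℕ → ℤ) (two_mul_pairProd_add_sum_sq T)
  push_cast at hS hT'
  have hdiff : ∀ f : ℕ → ℤ,
      ∑ j, f (T j) = ∑ j, f (S j) + (f (T p) - f (S p)) + (f (T q) - f (S q)) := by
    intro f
    rw [add_assoc, ← sub_eq_iff_eq_add', ← Finset.sum_sub_distrib]
    exact Fintype.sum_eq_add p q hpq fun j hj => by rw [hT j hj.1 hj.2, sub_self]
  rw [hdiff (fun m => m), hdiff (fun m => (m : ℤ) ^ 2)] at hT'
  have hTq : (T q : ℤ) = S p + S q - T p := by omega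
  rw [hTq] at hT'
  have h2 : 2 * ((pairProd T : ℤ) + S p * S q) = 2 * (pairProd S + T p * T q) := by
    rw [hTq]
    linear_combination hT' - hS
  exact_mod_cast (by omega : ((pairProd T : ℤ) + S p * S q) = pairProd S + T p * T q)

end PairProd

section PartSum

variable {r s : ℕ} (x : Fin r → ℕ) (g : Fin r → Fin s)

theorem pairProdSum_eq_pairProd : pairProdSum x g = pairProd (partSum x g) := rfl

theorem sum_partSum : ∑ i, partSum x g i = ∑ a, x a :=
  Finset.sum_fiberwise _ _ _

theorem le_partSum (a : Fin r) : x a ≤ partSum x g (g a) :=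
  Finset.single_le_sum (fun _ _ => Nat.zero_le _) (by simp)

theorem partSum_le_sum (i : Fin s) : partSum x g i ≤ ∑ a, x a :=
  Finset.sum_le_sum_of_subset (Finset.filter_subset _ _)

theorem partSum_update_of_ne {b : Fin r} {i : Fin s} (h : g b ≠ i) (v : ℕ) :
    partSum (update x b v) g i = partSum x g i :=
  Finset.sum_congr rfl fun a ha =>
    update_of_ne (fun hab => h (by subst hab; exact (Finset.mem_filter.1 ha).2)) v x

theorem partSum_update_add (b : Fin r) (v : ℕ) :
    partSum (update x b v) g (g b) + x b = partSum x g (g b) + v := by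
  have hb : b ∈ Finset.univ.filter (fun a => g a = g b) := by simp
  rw [partSum, partSum, ← Finset.add_sum_erase _ _ hb, ← Finset.add_sum_erase _ x hb,
    update_self, Finset.sum_congr rfl fun a ha => update_of_ne (Finset.ne_of_mem_erase ha) v x]
  ring

theorem partSum_comp_perm (σ : Equiv.Perm (Fin r)) (i : Fin s) :
    partSum x (g ∘ σ) i = partSum (x ∘ σ.symm) g i :=
  Finset.sum_equiv σ (by simp) fun a _ => by simp

theorem partSum_comp_swap_of_ne {a b : Fin r} {i : Fin s} (ha : g a ≠ i) (hb : g b ≠ i) :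
    partSum x (g ∘ Equiv.swap a b) i = partSum x g i := by
  rw [partSum_comp_perm, Equiv.symm_swap, Equiv.comp_swap_eq_update,
    partSum_update_of_ne _ _ ha, partSum_update_of_ne _ _ hb]

theorem partSum_comp_swap_add {a b : Fin r} (hab : g a ≠ g b) :
    partSum x (g ∘ Equiv.swap a b) (g a) + x a = partSum x g (g a) + x b := by
  have hne : b ≠ a := fun h => hab (h ▸ rfl)
  have h := partSum_update_add (update x b (x a)) g a (x b)
  rw [update_of_ne hne.symm, partSum_update_of_ne _ _ hab.symm] at h
  rw [partSum_comp_perm, Equiv.symm_swap, Equiv.comp_swap_eq_update, h]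

theorem pairProdSum_le_comp_swap {a b : Fin r} (hx : x a ≤ x b)
    (hab : partSum x g (g a) + x b ≤ partSum x g (g b) + x a) :
    pairProdSum x g ≤ pairProdSum x (g ∘ Equiv.swap a b) := by
  by_cases hg : g a = g b
  · have hswap : g ∘ Equiv.swap a b = g := by
      funext c
      rcases eq_or_ne c a with rfl | hca
      · simp [hg]
      rcases eq_or_ne c b with rfl | hcb
      · simp [hg]
      simp [Equiv.swap_apply_of_ne_of_ne hca hcb]
    rw [hswap]
  have hA := partSum_comp_swap_add x g hg
  have hB := partSum_comp_swap_add x g (Ne.symm hg)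
  rw [Equiv.swap_comm] at hB
  set g' := g ∘ Equiv.swap a b
  have key := pairProd_add_mul_eq_add_mul (S := partSum x g) (T := partSum x g') hg
    (fun j hja hjb => partSum_comp_swap_of_ne x g (Ne.symm hja) (Ne.symm hjb)) (by omega)
  have hprod : partSum x g (g a) * partSum x g (g b) ≤
      partSum x g' (g a) * partSum x g' (g b) := by
    zify at hx hab hA hB ⊢
    have hA' : (partSum x g' (g a) : ℤ) = partSum x g (g a) + (x b - x a) := by linarith
    have hB' : (partSum x g' (g b) : ℤ) = partSum x g (g b) - (x b - x a) := by linarith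
    rw [hA', hB']
    nlinarith [mul_nonneg (sub_nonneg.2 hx)
      (by linarith : (0 : ℤ) ≤ partSum x g (g b) + x a - partSum x g (g a) - x b)]
  rw [pairProdSum_eq_pairProd, pairProdSum_eq_pairProd]
  omega

end PartSum

section Excess

variable {r s : ℕ}

/-- `n_I - m_I` for the part `I` with label `i`. -/
noncomputable def partExcess (x : Fin r → ℕ) (g : Fin r → Fin s) (i : Fin s) : ℕ :=
  partSum x g i - sInf (x '' {a | g a = i})

theorem sInf_image_fiber_of_forall_le {x : Fin r → ℕ} {z : Fin r} (hz : ∀ a, x z ≤ x a)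
    (g : Fin r → Fin s) : sInf (x '' {a | g a = g z}) = x z :=
  le_antisymm (Nat.sInf_le ⟨z, rfl, rfl⟩)
    (le_csInf ⟨x z, z, rfl, rfl⟩ (by rintro _ ⟨a, -, rfl⟩; exact hz a))

theorem partExcess_of_forall_le {x : Fin r → ℕ} {z : Fin r} (hz : ∀ a, x z ≤ x a)
    (g : Fin r → Fin s) : partExcess x g (g z) = partSum x g (g z) - x z := by
  rw [partExcess, sInf_image_fiber_of_forall_le hz]

theorem exists_sInf_image_fiber (x : Fin r → ℕ) {g : Fin r → Fin s} (hg : Surjective g)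
    (i : Fin s) : ∃ a, g a = i ∧ sInf (x '' {a | g a = i}) = x a := by
  obtain ⟨b, hb⟩ := hg i
  obtain ⟨a, ha, h⟩ := Nat.sInf_mem (⟨x b, b, hb, rfl⟩ : (x '' {a | g a = i}).Nonempty)
  exact ⟨a, ha, h.symm⟩

variable {n : Fin r → ℕ} {z : Fin r}

theorem mul_sum_sub_add_pairProdSum_update {K : ℕ} (hK : K ≤ n z) (g : Fin r → Fin s) :
    K * (∑ a, n a - n z) + pairProdSum (update n z (n z - K)) g =
      pairProdSum n g + K * (partSum n g (g z) - n z) := by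
  have h := pairProd_add_mul_eq_of_add_eq (S := partSum n g)
    (T := partSum (update n z (n z - K)) g) (p := g z) (K := K)
    (fun j hj => partSum_update_of_ne n g (Ne.symm hj) _)
    (by have := partSum_update_add n g z (n z - K); omega)
  rw [sum_partSum] at h
  rw [pairProdSum_eq_pairProd, pairProdSum_eq_pairProd, ← h]
  have hz := le_partSum n g z
  have hS := partSum_le_sum n g (g z)
  rw [show ∑ a, n a - n z = (∑ a, n a - partSum n g (g z)) + (partSum n g (g z) - n z) by omega]
  ring

theorem exists_pairProdSum_add_mul_sup_partExcess_le (hz : ∀ a, n z ≤ n a) (K : ℕ)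
    {g : Fin r → Fin s} (hg : Surjective g) :
    ∃ g' : Fin r → Fin s, Surjective g' ∧
      pairProdSum n g + K * Finset.univ.sup (partExcess n g) ≤
        pairProdSum n g' + K * (partSum n g' (g' z) - n z) := by
  have : Nonempty (Fin s) := ⟨g z⟩
  obtain ⟨q, -, hq⟩ := Finset.exists_mem_eq_sup Finset.univ Finset.univ_nonempty (partExcess n g)
  obtain ⟨a, rfl, ha⟩ := exists_sInf_image_fiber n hg q
  have hexc : partSum n g (g z) - n z ≤ partSum n g (g a) - n a := by
    have h := Finset.le_sup (f := partExcess n g) (Finset.mem_univ (g z))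
    rwa [partExcess_of_forall_le hz, hq, partExcess, ha] at h
  rw [hq, partExcess, ha]
  by_cases hza : g z = g a
  · have hna : n a = n z := by rw [← ha, ← hza, sInf_image_fiber_of_forall_le hz]
    exact ⟨g, hg, by rw [hza, hna]⟩
  refine ⟨g ∘ Equiv.swap a z, hg.comp (Equiv.surjective _), ?_⟩
  have hswap := partSum_comp_swap_add n g (Ne.symm hza)
  have ha_le := le_partSum n g a
  have hle := pairProdSum_le_comp_swap n g (hz a) (by omega)
  rw [Equiv.swap_comm] at hle
  simp only [comp_apply, Equiv.swap_apply_right]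
  rw [show partSum n (g ∘ Equiv.swap a z) (g a) - n z = partSum n g (g a) - n a by omega]
  exact Nat.add_le_add_right hle _

theorem sup_mul_sup_partExcess_add_pairProdSum (hz : ∀ a, n z ≤ n a) {K : ℕ} (hK : K ≤ n z)
    (hs : ∃ g : Fin r → Fin s, Surjective g) :
    (Finset.univ.filter fun g : Fin r → Fin s => Surjective g).sup
        (fun g => K * Finset.univ.sup (partExcess n g) + pairProdSum n g) =
      K * (∑ a, n a - n z) +
        (Finset.univ.filter fun g : Fin r → Fin s => Surjective g).sup
          (pairProdSum (update n z (n z - K))) := by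
  refine le_antisymm (Finset.sup_le fun g hg => ?_) ?_
  · obtain ⟨g', hg', hle⟩ :=
      exists_pairProdSum_add_mul_sup_partExcess_le hz K (Finset.mem_filter.1 hg).2
    calc K * Finset.univ.sup (partExcess n g) + pairProdSum n g
        ≤ pairProdSum n g' + K * (partSum n g' (g' z) - n z) := by rw [add_comm]; exact hle
      _ = K * (∑ a, n a - n z) + pairProdSum (update n z (n z - K)) g' :=
        (mul_sum_sub_add_pairProdSum_update hK g').symm
      _ ≤ _ := Nat.add_le_add_left (Finset.le_sup (Finset.mem_filter.2 ⟨Finset.mem_univ _, hg'⟩)) _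
  · obtain ⟨g₀, hg₀⟩ := hs
    obtain ⟨g, hg, hmax⟩ := Finset.exists_mem_eq_sup _
      ⟨g₀, Finset.mem_filter.2 ⟨Finset.mem_univ _, hg₀⟩⟩ (pairProdSum (update n z (n z - K)))
    calc K * (∑ a, n a - n z) + _ = pairProdSum n g + K * (partSum n g (g z) - n z) := by
          rw [hmax, mul_sum_sub_add_pairProdSum_update hK g]
      _ ≤ K * Finset.univ.sup (partExcess n g) + pairProdSum n g := by
          rw [add_comm, ← partExcess_of_forall_le hz]
          gcongr
          exact Finset.le_sup (Finset.mem_univ _)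
      _ ≤ _ := Finset.le_sup (f := fun g => K * Finset.univ.sup (partExcess n g) + pairProdSum n g) hg

end Excess

/-- Equivalence of the two formulations (Han–Zhao's conjectured value versus the
`f_t`-formulation): for `r > t ≥ 3`, `k ≥ 2` and `k ≤ n_1 ≤ ⋯ ≤ n_r`, the maximum over
partitions `P` of `[r]` into `t−1` nonempty parts of
`(k−1)·max_{I∈P}(n_I − m_I) + Σ_{I≠I'∈P} n_I n_{I'}` equals
`(k−1)(n − n_1) + f_t(n_1−(k−1), n_2, …, n_r)`. -/
theorem stmt_6 (k r t : ℕ) (ht : 3 ≤ t) (htr : t < r)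
    (n : Fin r → ℕ) (hmono : Monotone n) (hkn : k ≤ n ⟨0, by omega⟩) :
    (Finset.univ.filter (fun g : Fin r → Fin (t - 1) => Function.Surjective g)).sup
        (fun g =>
          (k - 1) * (Finset.univ.sup fun i : Fin (t - 1) =>
              partSum n g i - sInf (n '' {a | g a = i})) +
            pairProdSum n g) =
      (k - 1) * ((∑ i, n i) - n ⟨0, by omega⟩) +
        fT t (Function.update n ⟨0, by omega⟩ (n ⟨0, by omega⟩ - (k - 1))) := by
  have : Nonempty (Fin (t - 1)) := ⟨⟨0, by omega⟩⟩
  exact sup_mul_sup_partExcess_add_pairProdSum (fun a => hmono (Nat.zero_le a.1)) (by omega)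
    ⟨invFun (Fin.castLE (by omega : t - 1 ≤ r)), invFun_surjective (Fin.castLE_injective _)⟩
end

section
/- Let n_1, n_2, ..., n_r be positive integers with n_1 + 2 ≤ n_i for every i with 2 ≤ i ≤ r. For two distinct indices i, j with 2 ≤ i, j ≤ r, f_3 applied to the multiset obtained from {n_1, ..., n_r} by replacing n_i with n_i − 1 and n_j with n_j − 1 is at most f_3(n_1, n_2, ..., n_r) − Σ_{m=1}^r n_m + max{n_1 + 2, n_i − n_1 + 1}. -/
open SimpleGraph Finset

/-!
Take an optimal cut `(A, Aᶜ)` for the decremented sequence with `i ∈ A`, and let `a`, `b` be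
the sums of the original `n` over `A` and `Aᶜ`, so that `a * b ≤ f₃(n)` and `a + b = Σ n`.
If `j ∉ A` the cut is worth `(a - 1) (b - 1) = a b - (a + b) + 1`. If `j ∈ A` it is worth
`(a - 2) b`, which is within the bound unless `a - b > M`, the maximum in the bound. Then
moving `n₁` out of `A` (if `1 ∈ A`), or swapping `i` with `1` (if not), transfers a mass
`e ∈ {n₁, nᵢ - n₁}` with `1 ≤ e` and `e + 1 ≤ M`, and the new cut is worth
`a b + e (a - b - e) ≥ a b + (a - b) - M`.
-/

open Function

section CutProduct

variable {r : ℕ}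

def cut (A : Finset (Fin r)) : Fin r → Fin 2 := fun a => if a ∈ A then 0 else 1

theorem cut_filter_eq_zero (g : Fin r → Fin 2) : cut {a | g a = 0} = g := by
  funext a
  unfold cut
  split_ifs <;> grind

theorem surjective_cut_iff {A : Finset (Fin r)} :
    Surjective (cut A) ↔ A.Nonempty ∧ Aᶜ.Nonempty := by
  simp only [Surjective, Fin.forall_fin_two, cut, Finset.Nonempty, mem_compl]
  grind

theorem pairProdSum_cut (x : Fin r → ℕ) (A : Finset (Fin r)) :
    pairProdSum x (cut A) = (∑ a ∈ A, x a) * ∑ a ∈ Aᶜ, x a := by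
  have hpairs : ({p | p.1 < p.2} : Finset (Fin 2 × Fin 2)) = {(0, 1)} := by decide
  simp only [pairProdSum, hpairs, sum_singleton, partSum, cut]
  congr 2 <;> ext a <;> by_cases a ∈ A <;> simp [*]

theorem sum_mul_sum_compl_le_fT_three (x : Fin r → ℕ) {A : Finset (Fin r)}
    (hA : A.Nonempty) (hAc : Aᶜ.Nonempty) : (∑ a ∈ A, x a) * ∑ a ∈ Aᶜ, x a ≤ fT 3 x := by
  rw [← pairProdSum_cut]
  exact le_sup (mem_filter.2 ⟨mem_univ _, surjective_cut_iff.2 ⟨hA, hAc⟩⟩)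

theorem sum_mul_sub_sum_le_fT_three (x : Fin r → ℕ) {A : Finset (Fin r)}
    (hA : A.Nonempty) (hAc : Aᶜ.Nonempty) :
    (∑ a ∈ A, (x a : ℤ)) * (∑ a, (x a : ℤ) - ∑ a ∈ A, (x a : ℤ)) ≤ fT 3 x := by
  rw [← sum_compl_add_sum A, add_sub_cancel_right, mul_comm]
  exact_mod_cast (mul_comm _ _).trans_le (sum_mul_sum_compl_le_fT_three x hA hAc)

theorem exists_mem_fT_three_eq (x : Fin r → ℕ) {i j : Fin r} (hij : i ≠ j) :
    ∃ A : Finset (Fin r), i ∈ A ∧ Aᶜ.Nonempty ∧ fT 3 x = (∑ a ∈ A, x a) * ∑ a ∈ Aᶜ, x a := by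
  have hcut : Surjective (cut {i}) := surjective_cut_iff.2 ⟨⟨i, by simp⟩, ⟨j, by simp [hij.symm]⟩⟩
  obtain ⟨g, hg, hfT⟩ := exists_mem_eq_sup _ ⟨_, mem_filter.2 ⟨mem_univ _, hcut⟩⟩
    (pairProdSum x)
  rw [← cut_filter_eq_zero g] at hg hfT
  set A : Finset (Fin r) := {a | g a = 0}
  obtain ⟨hA, hAc⟩ := surjective_cut_iff.1 (mem_filter.1 hg).2
  rw [pairProdSum_cut] at hfT
  by_cases hiA : i ∈ A
  · exact ⟨A, hiA, hAc, hfT⟩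
  · refine ⟨Aᶜ, mem_compl.2 hiA, by rwa [compl_compl], ?_⟩
    rw [compl_compl, mul_comm]
    exact hfT

end CutProduct

theorem sum_update_sub_one {ι : Type*} [DecidableEq ι] (s : Finset ι) (x : ι → ℕ) {i : ι}
    (hi : 0 < x i) :
    ∑ a ∈ s, (update x i (x i - 1) a : ℤ) = ∑ a ∈ s, (x a : ℤ) - if i ∈ s then 1 else 0 := by
  have hpoint : ∀ a, (update x i (x i - 1) a : ℤ) = x a - if a = i then 1 else 0 := by
    intro a
    rcases eq_or_ne a i with rfl | ha
    · simp [Nat.cast_sub hi]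
    · simp [ha]
  simp only [hpoint, sum_sub_distrib, sum_ite_eq']

theorem sum_update_update_sub_one {ι : Type*} [DecidableEq ι] (s : Finset ι) (x : ι → ℕ)
    {i j : ι} (hij : i ≠ j) (hi : 0 < x i) (hj : 0 < x j) :
    ∑ a ∈ s, (update (update x i (x i - 1)) j (x j - 1) a : ℤ) =
      ∑ a ∈ s, (x a : ℤ) - (if i ∈ s then 1 else 0) - if j ∈ s then 1 else 0 := by
  have hj' : update x i (x i - 1) j = x j := update_of_ne hij.symm _ _
  rw [← hj', sum_update_sub_one s _ (hj'.symm ▸ hj), sum_update_sub_one s x hi]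

theorem sub_two_mul_le_of_transfer {a S e F M : ℤ} (hcut : a * (S - a) ≤ F)
    (hmove : (a - e) * (S - (a - e)) ≤ F) (he : 1 ≤ e) (hM : e + 1 ≤ M) :
    (a - 2) * (S - a) ≤ F - S + M := by
  by_cases hd : 2 * a - S ≤ M
  · nlinarith
  · nlinarith [mul_nonneg (sub_nonneg.2 he) (by linarith : (0 : ℤ) ≤ 2 * a - S - e)]

theorem sum_sub_two_mul_le_fT_three {r : ℕ} (n : Fin r → ℕ) {A : Finset (Fin r)} {i o : Fin r}
    (hiA : i ∈ A) (hAc : Aᶜ.Nonempty) (hio : i ≠ o) (ho : 0 < n o) (hoi : n o < n i)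
    {M : ℤ} (hM₁ : n o + 1 ≤ M) (hM₂ : n i - n o + 1 ≤ M) :
    (∑ a ∈ A, (n a : ℤ) - 2) * (∑ a, (n a : ℤ) - ∑ a ∈ A, (n a : ℤ)) ≤
      fT 3 n - ∑ a, (n a : ℤ) + M := by
  have hcut := sum_mul_sub_sum_le_fT_three n ⟨i, hiA⟩ hAc
  by_cases hoA : o ∈ A
  · have hmove := sum_mul_sub_sum_le_fT_three n (A := A.erase o)
      ⟨i, mem_erase.2 ⟨hio, hiA⟩⟩ ⟨o, by simp⟩
    rw [eq_sub_of_add_eq (sum_erase_add A (fun a => (n a : ℤ)) hoA)] at hmove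
    exact sub_two_mul_le_of_transfer hcut hmove (by exact_mod_cast ho) hM₁
  · have hmove := sum_mul_sub_sum_le_fT_three n (A := insert o (A.erase i))
      ⟨o, mem_insert_self _ _⟩ ⟨i, by simp [hio]⟩
    have hsum : ∑ a ∈ insert o (A.erase i), (n a : ℤ) = ∑ a ∈ A, (n a : ℤ) - (n i - n o) := by
      rw [sum_insert (by simp [hoA]), ← sum_erase_add _ _ hiA]
      ring
    rw [hsum] at hmove
    exact sub_two_mul_le_of_transfer hcut hmove (by omega) hM₂

theorem stmt_8_general (r : ℕ) (n : Fin r → ℕ) (hpos : ∀ m, 0 < n m) (i j : Fin r)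
    (hij : i ≠ j) (hi : i ≠ ⟨0, i.pos⟩)
    (h : ∀ m : Fin r, m ≠ ⟨0, i.pos⟩ → n ⟨0, i.pos⟩ + 2 ≤ n m) :
    (fT 3 (Function.update (Function.update n i (n i - 1)) j (n j - 1)) : ℤ) ≤
      (fT 3 n : ℤ) - (∑ m, (n m : ℤ)) +
        max ((n ⟨0, i.pos⟩ : ℤ) + 2) ((n i : ℤ) - (n ⟨0, i.pos⟩ : ℤ) + 1) := by
  set o : Fin r := ⟨0, i.pos⟩
  have hoi : n o + 2 ≤ n i := h i hi
  have hM₁ := le_max_left ((n o : ℤ) + 2) (n i - n o + 1)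
  have hM₂ := le_max_right ((n o : ℤ) + 2) (n i - n o + 1)
  obtain ⟨A, hiA, hAc, hfT⟩ :=
    exists_mem_fT_three_eq (update (update n i (n i - 1)) j (n j - 1)) hij
  have hcompl : ∑ a ∈ Aᶜ, (n a : ℤ) = ∑ a, (n a : ℤ) - ∑ a ∈ A, (n a : ℤ) :=
    eq_sub_of_add_eq (sum_compl_add_sum A _)
  rw [hfT]
  push_cast
  simp only [sum_update_update_sub_one _ _ hij (hpos i) (hpos j), hcompl, mem_compl, hiA,
    not_true_eq_false, if_true, if_false, sub_zero]
  by_cases hjA : j ∈ A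
  · simp only [hjA, not_true_eq_false, if_true, if_false, sub_zero, sub_sub]
    exact sum_sub_two_mul_le_fT_three n hiA hAc hi (hpos o) (by omega) (by linarith) hM₂
  · simp only [hjA, not_false_eq_true, if_true, if_false, sub_zero]
    nlinarith [sum_mul_sub_sum_le_fT_three n ⟨i, hiA⟩ hAc]

/-- Proposition: if `n_1 + 2 ≤ n_m` for all `m ≥ 2`, and `i ≠ j` are indices with
`i, j ≥ 2`, then replacing `n_i` by `n_i − 1` and `n_j` by `n_j − 1` yields
`f_3 ≤ f_3(n_1,…,n_r) − Σ_m n_m + max{n_1 + 2, n_i − n_1 + 1}`. -/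
theorem stmt_8 (r : ℕ) (n : Fin r → ℕ) (hpos : ∀ m, 0 < n m) (i j : Fin r)
    (hij : i ≠ j) (hi : i ≠ ⟨0, i.pos⟩) (hj : j ≠ ⟨0, i.pos⟩)
    (h : ∀ m : Fin r, m ≠ ⟨0, i.pos⟩ → n ⟨0, i.pos⟩ + 2 ≤ n m) :
    (fT 3 (Function.update (Function.update n i (n i - 1)) j (n j - 1)) : ℤ) ≤
      (fT 3 n : ℤ) - (∑ m, (n m : ℤ)) +
        max ((n ⟨0, i.pos⟩ : ℤ) + 2) ((n i : ℤ) - (n ⟨0, i.pos⟩ : ℤ) + 1) :=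
  stmt_8_general r n hpos i j hij hi h
end

section
/- Let a, b, c, d be positive integers with a ≤ b ≤ c ≤ d. If d ≥ b + c then f_3(a,b,c,d) = d(a+b+c), and if d ≤ b + c then f_3(a,b,c,d) = (a+d)(b+c). -/
open SimpleGraph Finset

/-!
Write the sum of the part containing `d` as `d + σ`, where `σ` is a subset sum of `a ≤ b ≤ c`,
so `σ = 0`, `σ = a` or `σ ≥ b`; the other part sums to `τ = a + b + c - σ`. Then
`(d + σ)τ - d(a + b + c) = σ(a + b + c - d - σ)` and
`(d + σ)τ - (a + d)(b + c) = (σ - a)(b + c - d - σ)`, and in the respective cases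
`b + c ≤ d` and `d ≤ b + c` these are `≤ 0` for each kind of `σ`.
A partition with an empty part has value `0`, so the bound holds for all labellings by `Fin 2`.
-/

lemma pairProdSum_fin_two {r : ℕ} (x : Fin r → ℕ) (g : Fin r → Fin 2) :
    pairProdSum x g = partSum x g 0 * partSum x g 1 := by
  have : univ.filter (fun p : Fin 2 × Fin 2 => p.1 < p.2) = {(0, 1)} := by decide
  simp [pairProdSum, this]

lemma pairProdSum_fin_two_eq_mul_rev {r : ℕ} (x : Fin r → ℕ) (g : Fin r → Fin 2)
    (j : Fin 2) : pairProdSum x g = partSum x g j * partSum x g j.rev := by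
  fin_cases j <;> simp [pairProdSum_fin_two, mul_comm]

lemma partSum_add_partSum_rev {r : ℕ} (x : Fin r → ℕ) (g : Fin r → Fin 2) (j : Fin 2) :
    partSum x g j + partSum x g j.rev = ∑ a, x a := by
  have hrev : ∀ a, g a = j.rev ↔ ¬ g a = j := by
    intro a; fin_cases j <;> rcases Fin.exists_fin_two.1 ⟨g a, rfl⟩ with h | h <;> simp [h]
  simp only [partSum, hrev, sum_filter_add_sum_filter_not]

lemma partSum_eq_add_of_apply_last {n s : ℕ} (x : Fin (n + 1) → ℕ) {g : Fin (n + 1) → Fin s}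
    {j : Fin s} (hj : g (Fin.last n) = j) :
    partSum x g j = x (Fin.last n) +
      ∑ i ∈ univ.filter (fun i : Fin n => g i.castSucc = j), x i.castSucc := by
  simp only [partSum, sum_filter, Fin.sum_univ_castSucc, if_pos hj]
  ring

lemma exists_pairProdSum_eq_mul {n : ℕ} (x : Fin (n + 1) → ℕ) (g : Fin (n + 1) → Fin 2) :
    ∃ s : Finset (Fin n), pairProdSum x g =
      (x (Fin.last n) + ∑ i ∈ s, x i.castSucc) * ∑ i ∈ sᶜ, x i.castSucc := by
  obtain ⟨j, hj⟩ : ∃ j, g (Fin.last n) = j := ⟨_, rfl⟩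
  set s := univ.filter (fun i : Fin n => g i.castSucc = j)
  have hpart : partSum x g j = x (Fin.last n) + ∑ i ∈ s, x i.castSucc :=
    partSum_eq_add_of_apply_last x hj
  have htotal := partSum_add_partSum_rev x g j
  have hsplit := sum_add_sum_compl s (fun i => x i.castSucc)
  rw [Fin.sum_univ_castSucc] at htotal
  exact ⟨s, by rw [pairProdSum_fin_two_eq_mul_rev x g j, ← hpart]; congr 1; omega⟩

lemma sum_eq_zero_or_eq_or_le_of_monotone {n : ℕ} {x : Fin (n + 2) → ℕ} (hx : Monotone x)
    (s : Finset (Fin (n + 2))) :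
    ∑ i ∈ s, x i = 0 ∨ ∑ i ∈ s, x i = x 0 ∨ x 1 ≤ ∑ i ∈ s, x i := by
  by_cases h : ∃ i ∈ s, i ≠ 0
  · obtain ⟨i, hi, hi0⟩ := h
    exact Or.inr <| Or.inr <|
      (hx (Fin.one_le_of_ne_zero hi0)).trans (single_le_sum (fun _ _ => Nat.zero_le _) hi)
  · push Not at h
    rcases subset_singleton_iff.1 (fun i hi => mem_singleton.2 (h i hi)) with rfl | rfl <;> simp

lemma fT_three_eq {r : ℕ} (x : Fin r → ℕ) (T : ℕ) (g₀ : Fin r → Fin 2)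
    (hg₀ : Function.Surjective g₀) (hval : pairProdSum x g₀ = T)
    (hle : ∀ g : Fin r → Fin 2, pairProdSum x g ≤ T) : fT 3 x = T :=
  le_antisymm (Finset.sup_le fun g _ => hle g)
    (hval ▸ le_sup (f := pairProdSum x) (mem_filter.2 ⟨mem_univ _, hg₀⟩))

lemma split_mul_le_of_add_le {a b c d σ τ : ℕ} (hab : a ≤ b) (hd : b + c ≤ d)
    (hστ : σ + τ = a + b + c) (hσ : σ = 0 ∨ σ = a ∨ b ≤ σ) :
    (d + σ) * τ ≤ d * (a + b + c) := by
  rcases hσ with rfl | rfl | hσ <;> nlinarith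

lemma split_mul_le_of_le_add {a b c d σ τ : ℕ} (hab : a ≤ b) (hcd : c ≤ d)
    (hd : d ≤ b + c) (hστ : σ + τ = a + b + c) (hσ : σ = 0 ∨ σ = a ∨ b ≤ σ) :
    (d + σ) * τ ≤ (a + d) * (b + c) := by
  rcases hσ with rfl | rfl | hσ <;> nlinarith

lemma pairProdSum_le_of_forall_split {a b c d T : ℕ} (hab : a ≤ b) (hbc : b ≤ c)
    (hT : ∀ σ τ, σ + τ = a + b + c → (σ = 0 ∨ σ = a ∨ b ≤ σ) →
      (d + σ) * τ ≤ T)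
    (g : Fin 4 → Fin 2) : pairProdSum ![a, b, c, d] g ≤ T := by
  set y : Fin 3 → ℕ := fun i => ![a, b, c, d] i.castSucc
  have hmono : Monotone y := Fin.monotone_iff_le_succ.2 fun i => by fin_cases i <;> simpa [y]
  obtain ⟨s, hs⟩ := exists_pairProdSum_eq_mul ![a, b, c, d] g
  rw [hs]
  refine hT _ _ ?_ (sum_eq_zero_or_eq_or_le_of_monotone hmono s)
  rw [sum_add_sum_compl, Fin.sum_univ_three]
  rfl

theorem stmt_10_general (a b c d : ℕ) (hab : a ≤ b) (hbc : b ≤ c) (hcd : c ≤ d) :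
    (b + c ≤ d → fT 3 ![a, b, c, d] = d * (a + b + c)) ∧
    (d ≤ b + c → fT 3 ![a, b, c, d] = (a + d) * (b + c)) := by
  refine ⟨fun hd => ?_, fun hd => ?_⟩
  · refine fT_three_eq _ _ ![0, 0, 0, 1] (by decide) ?_ fun g => ?_
    · simp [pairProdSum_fin_two, partSum, sum_filter, Fin.sum_univ_four, mul_comm]
    · exact pairProdSum_le_of_forall_split hab hbc
        (fun _ _ hστ hσ => split_mul_le_of_add_le hab hd hστ hσ) g
  · refine fT_three_eq _ _ ![0, 1, 1, 0] (by decide) ?_ fun g => ?_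
    · simp [pairProdSum_fin_two, partSum, sum_filter, Fin.sum_univ_four]
    · exact pairProdSum_le_of_forall_split hab hbc
        (fun _ _ hστ hσ => split_mul_le_of_le_add hab hcd hd hστ hσ) g

/-- For positive `a ≤ b ≤ c ≤ d`: if `d ≥ b + c` then `f_3(a,b,c,d) = d(a+b+c)`, and if
`d ≤ b + c` then `f_3(a,b,c,d) = (a+d)(b+c)`. -/
theorem stmt_10 (a b c d : ℕ) (ha : 0 < a) (hab : a ≤ b) (hbc : b ≤ c) (hcd : c ≤ d) :
    (b + c ≤ d → fT 3 ![a, b, c, d] = d * (a + b + c)) ∧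
    (d ≤ b + c → fT 3 ![a, b, c, d] = (a + d) * (b + c)) :=
  stmt_10_general a b c d hab hbc hcd
end
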